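/- arXiv:1002.1104 — 5 statements merged into one kernel-verified Lean document; each statement's English description precedes it below -/
import Mathlib

section
/- Let λ = E[Q̂_{k,s}] < ∞ and let U be a Poisson random variable with mean λ. Then the variation distance between the law of Q̂_{k,s} and the law of U satisfies sup_{A ⊆ ℕ} |Pr(Q̂_{k,s} ∈ A) − Pr(U ∈ A)| ≤ b_1(s) + b_2(s). -/
open MeasureTheory ProbabilityTheory Finset Filter Asymptotics

noncomputable section

namespace PaperModel

variable {Ω : Type*}

/-- Support of itemset `X` in the dataset given by the Bernoulli family `A`. -/
def support {n t : ℕ} (A : Fin t → Fin n → Ω → Bool) (X : Finset (Fin n)) (ω : Ω) : ℕ :=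
  (Finset.univ.filter fun j => ∀ i ∈ X, A j i ω = true).card

/-- Indicator `Z_X` of the event that the support of `X` is at least `s`. -/
def Z {n t : ℕ} (A : Fin t → Fin n → Ω → Bool) (s : ℕ) (X : Finset (Fin n)) (ω : Ω) : ℝ :=
  if s ≤ support A X ω then 1 else 0

/-- `Q̂_{k,s}`: the number of `k`-itemsets with support at least `s`. -/
def Qhat {n t : ℕ} (A : Fin t → Fin n → Ω → Bool) (k s : ℕ) (ω : Ω) : ℕ :=
  ((Finset.univ.powersetCard k).filter fun X => s ≤ support A X ω).card

/-- `p_X = Pr(Z_X = 1)`. -/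
def pX [MeasurableSpace Ω] (μ : Measure Ω) {n t : ℕ} (A : Fin t → Fin n → Ω → Bool)
    (s : ℕ) (X : Finset (Fin n)) : ℝ :=
  (μ {ω | s ≤ support A X ω}).toReal

/-- `E[Z_X Z_Y] = Pr(Z_X = 1 ∧ Z_Y = 1)`. -/
def pXY [MeasurableSpace Ω] (μ : Measure Ω) {n t : ℕ} (A : Fin t → Fin n → Ω → Bool)
    (s : ℕ) (X Y : Finset (Fin n)) : ℝ :=
  (μ ({ω | s ≤ support A X ω} ∩ {ω | s ≤ support A Y ω})).toReal

/-- `b_1(s) = Σ_{|X|=k} Σ_{Y ∈ I(X)} p_X p_Y`. -/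
def b1 [MeasurableSpace Ω] (μ : Measure Ω) {n t : ℕ} (A : Fin t → Fin n → Ω → Bool)
    (k s : ℕ) : ℝ :=
  ∑ X ∈ Finset.univ.powersetCard k,
    ∑ Y ∈ (Finset.univ.powersetCard k).filter (fun Y => Y ∩ X ≠ ∅),
      pX μ A s X * pX μ A s Y

/-- `b_2(s) = Σ_{|X|=k} Σ_{X ≠ Y ∈ I(X)} E[Z_X Z_Y]`. -/
def b2 [MeasurableSpace Ω] (μ : Measure Ω) {n t : ℕ} (A : Fin t → Fin n → Ω → Bool)
    (k s : ℕ) : ℝ :=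
  ∑ X ∈ Finset.univ.powersetCard k,
    ∑ Y ∈ (Finset.univ.powersetCard k).filter (fun Y => Y ∩ X ≠ ∅ ∧ Y ≠ X),
      pXY μ A s X Y

/-- Probability that a Poisson random variable with mean `lam` lands in `S ⊆ ℕ`. -/
def poissonProb (lam : ℝ) (S : Set ℕ) : ℝ :=
  ∑' j : S, Real.exp (-lam) * lam ^ (j : ℕ) / (Nat.factorial (j : ℕ) : ℝ)

/-!
The Stein–Chen method. For `r = λ > 0` and `S ⊆ ℕ` let `g` solve the Stein equation
`r g (w + 1) - w g w = 1_S w - Po(r)(S)` with `g 0 = 0`. Writing `W = Q̂_{k,s} = ∑_X Z_X`,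
`P(W ∈ S) - Po(r)(S) = E[r g (W + 1) - W g W] = ∑_X (p_X E[g (W + 1)] - E[Z_X g W])`.
The indicator `Z_X` only sees the columns of the data indexed by `X`, so it is independent of the
number `V_X` of frequent itemsets disjoint from `X`, and `E[Z_X g (V_X + 1)] = p_X E[g (V_X + 1)]`.
Replacing `W` by `V_X + 1` in both terms costs at most `sup |Δg|` times
`p_X ∑_{Y ∩ X ≠ ∅} p_Y + ∑_{Y ≠ X, Y ∩ X ≠ ∅} E[Z_X Z_Y]`.

The increments of `g` are at most `1` in absolute value: since, with `π_j = Po(r){j}`,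
`r π_j g (j + 1) = Po(S ∩ [0, j]) - Po(S) Po([0, j])`, the increment at `j` is an affine function
of the masses `S` carries below, at and above `j`, with extreme values
`±(Po((j, ∞)) / r + Po([0, j)) / j)`, and the head and tail bounds of `Po(r)` make these `≤ 1`.
-/

open scoped NNReal

section Stein

variable (r : ℝ≥0)

lemma poissonMeasure_real_singleton_succ_mul (n : ℕ) :
    Po(r).real {n + 1} * (n + 1) = r * Po(r).real {n} := by
  simp only [poissonMeasure_real_singleton, Nat.factorial_succ, Nat.cast_mul, pow_succ]
  field_simp
  push_cast
  ring

lemma hasSum_poissonMeasure_real_singleton : HasSum (fun n => Po(r).real {n}) 1 := by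
  simpa only [poissonMeasure_real_singleton] using hasSum_one_poissonMeasure r

lemma tsum_poissonMeasure_real_singleton_add (j : ℕ) :
    ∑' i, Po(r).real {i + j} = 1 - ∑ i ∈ range j, Po(r).real {i} :=
  ((hasSum_nat_add_iff' j).2 (hasSum_poissonMeasure_real_singleton r)).tsum_eq

lemma mul_sum_range_poissonMeasure_real_le (j : ℕ) :
    r * ∑ i ∈ range j, Po(r).real {i} ≤ j * ∑ i ∈ range (j + 1), Po(r).real {i} := by
  calc r * ∑ i ∈ range j, Po(r).real {i}
      = ∑ i ∈ range j, Po(r).real {i + 1} * (i + 1) := by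
        simp only [mul_sum, poissonMeasure_real_singleton_succ_mul]
    _ ≤ ∑ i ∈ range j, Po(r).real {i + 1} * j := by
        gcongr with i hi
        exact_mod_cast mem_range.1 hi
    _ ≤ j * ∑ i ∈ range (j + 1), Po(r).real {i} := by
        rw [← sum_mul, mul_comm, sum_range_succ' _ j]
        gcongr
        exact le_add_of_nonneg_right measureReal_nonneg

lemma mul_one_sub_sum_range_poissonMeasure_real_le (j : ℕ) :
    (j + 1) * (1 - ∑ i ∈ range (j + 1), Po(r).real {i})
      ≤ r * (1 - ∑ i ∈ range j, Po(r).real {i}) := by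
  have hsum := (hasSum_poissonMeasure_real_singleton r).summable
  rw [← tsum_poissonMeasure_real_singleton_add, ← tsum_poissonMeasure_real_singleton_add,
    ← tsum_mul_left, ← tsum_mul_left]
  refine Summable.tsum_le_tsum (fun i => ?_)
    (((summable_nat_add_iff (f := fun n => Po(r).real {n}) _).2 hsum).mul_left _)
    (((summable_nat_add_iff (f := fun n => Po(r).real {n}) _).2 hsum).mul_left _)
  rw [← poissonMeasure_real_singleton_succ_mul, mul_comm, add_assoc, add_comm j 1, ← add_assoc]
  gcongr
  linarith [(i.cast_nonneg : (0 : ℝ) ≤ i)]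

lemma poissonProb_eq_tsum_indicator (S : Set ℕ) :
    poissonProb r S = ∑' n, S.indicator (fun n => Po(r).real {n}) n := by
  simp only [poissonProb, ← poissonMeasure_real_singleton]
  exact tsum_subtype S (fun n => Po(r).real {n})

lemma poissonProb_zero (S : Set ℕ) : poissonProb 0 S = S.indicator 1 0 := by
  have h := poissonProb_eq_tsum_indicator 0 S
  rw [NNReal.coe_zero] at h
  rw [h, tsum_eq_single 0 fun n hn => by simp [poissonMeasure_real_singleton, hn]]
  by_cases h0 : 0 ∈ S <;> simp [h0, poissonMeasure_real_singleton]

lemma sum_range_indicator_le_poissonProb (S : Set ℕ) (j : ℕ) :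
    ∑ i ∈ range j, S.indicator (fun n => Po(r).real {n}) i ≤ poissonProb r S := by
  rw [poissonProb_eq_tsum_indicator]
  exact Summable.sum_le_tsum _ (fun i _ => Set.indicator_nonneg (fun _ _ => measureReal_nonneg) i)
    ((hasSum_poissonMeasure_real_singleton r).summable.indicator S)

lemma poissonProb_le_sum_range_indicator_add (S : Set ℕ) (j : ℕ) :
    poissonProb r S ≤ ∑ i ∈ range j, S.indicator (fun n => Po(r).real {n}) i
      + (1 - ∑ i ∈ range j, Po(r).real {i}) := by
  have hsum := (hasSum_poissonMeasure_real_singleton r).summable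
  rw [poissonProb_eq_tsum_indicator, ← (hsum.indicator S).sum_add_tsum_nat_add j,
    ← tsum_poissonMeasure_real_singleton_add r j]
  gcongr with i
  · exact (summable_nat_add_iff j).2 (hsum.indicator S)
  · exact (summable_nat_add_iff (f := fun n => Po(r).real {n}) j).2 hsum
  · exact Set.indicator_le_self' (fun _ _ => measureReal_nonneg) (i + j)

def steinSol (S : Set ℕ) : ℕ → ℝ
  | 0 => 0
  | j + 1 => (S.indicator 1 j - poissonProb r S + j * steinSol S j) / r

variable {r}

lemma steinSol_stein_eq (hr : r ≠ 0) (S : Set ℕ) (w : ℕ) :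
    r * steinSol r S (w + 1) - w * steinSol r S w = S.indicator 1 w - poissonProb r S := by
  rw [steinSol]
  field_simp
  ring

lemma mul_steinSol_succ (hr : r ≠ 0) (S : Set ℕ) (j : ℕ) :
    r * Po(r).real {j} * steinSol r S (j + 1)
      = ∑ i ∈ range (j + 1), S.indicator (fun n => Po(r).real {n}) i
        - poissonProb r S * ∑ i ∈ range (j + 1), Po(r).real {i} := by
  have hind : ∀ i, S.indicator (fun n => Po(r).real {n}) i = Po(r).real {i} * S.indicator 1 i :=
    fun i => by by_cases hi : i ∈ S <;> simp [hi]
  induction j with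
  | zero =>
    rw [sum_range_one, sum_range_one, hind, steinSol, steinSol]
    field_simp
    ring
  | succ j ih =>
    calc r * Po(r).real {j + 1} * steinSol r S (j + 1 + 1)
        = Po(r).real {j + 1} * (S.indicator 1 (j + 1) - poissonProb r S)
          + Po(r).real {j + 1} * (j + 1) * steinSol r S (j + 1) := by
          rw [steinSol]
          field_simp
          push_cast
          ring
      _ = _ := by
          rw [poissonMeasure_real_singleton_succ_mul, ih, sum_range_succ _ (j + 1),
            sum_range_succ _ (j + 1), hind]
          ring

lemma abs_steinSol_one_le (hr : r ≠ 0) (S : Set ℕ) : |steinSol r S 1| ≤ 1 := by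
  have hlo := sum_range_indicator_le_poissonProb r S 1
  have hhi := poissonProb_le_sum_range_indicator_add r S 1
  have htail := mul_one_sub_sum_range_poissonMeasure_real_le r 0
  have hr' : (0 : ℝ) < r := NNReal.coe_pos.2 (pos_iff_ne_zero.2 hr)
  simp only [sum_range_one, sum_range_zero, Nat.cast_zero, zero_add, one_mul, sub_zero,
    mul_one] at hlo hhi htail
  rw [steinSol, steinSol, abs_div, abs_of_pos hr', div_le_one hr', abs_le]
  by_cases h0 : 0 ∈ S <;> simp only [h0, Set.indicator_of_mem, Set.indicator_of_notMem,
    not_false_eq_true, Pi.one_apply] at hlo hhi ⊢ <;> constructor <;> push_cast <;>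
    nlinarith [measureReal_nonneg (μ := Po(r)) (s := {0})]

/-- The numerator `E` of the increment is affine in `a`, `ε`, `P` with coefficients of fixed sign
(by the head and tail bounds), so `|E|` is largest at a corner of the box of admissible values. -/
private lemma abs_steinSol_increment_numerator_le {a F ε p P r m : ℝ} (ha : 0 ≤ a) (haF : a ≤ F)
    (hε : 0 ≤ ε) (hεp : ε ≤ p) (hlo : a + ε ≤ P) (hhi : P ≤ a + ε + (1 - (F + p)))
    (hhead : r * F ≤ m * (F + p)) (htail : m * (1 - (F + p)) ≤ r * (1 - F)) (hm : 1 ≤ m)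
    (hp : 0 ≤ p) (hr : 0 ≤ r) :
    |m * (a + ε - P * (F + p)) - r * (a - P * F)| ≤ m * r * p := by
  have hc₁ := sub_nonneg.2 htail
  have hc₂ := sub_nonneg.2 hhead
  have hc₃ : 0 ≤ m * (1 - (F + p)) + r * F := add_nonneg (by nlinarith) (by nlinarith)
  have hmrp : 0 ≤ p * r * (m - 1) := mul_nonneg (mul_nonneg hp hr) (by linarith)
  rw [abs_le]
  constructor
  · nlinarith [mul_nonneg (sub_nonneg.2 haF) hc₁, mul_nonneg (sub_nonneg.2 hhi) hc₂,
      mul_nonneg hε hc₃, mul_nonneg hp hc₁]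
  · nlinarith [mul_nonneg ha hc₁, mul_nonneg (sub_nonneg.2 hlo) hc₂,
      mul_nonneg (sub_nonneg.2 hεp) hc₃, mul_nonneg hp hc₁]

lemma abs_steinSol_succ_succ_sub_le (hr : r ≠ 0) (S : Set ℕ) (j : ℕ) :
    |steinSol r S (j + 2) - steinSol r S (j + 1)| ≤ 1 := by
  have hK₁ := mul_steinSol_succ hr S j
  have hK₂ : _ = _ := mul_steinSol_succ hr S (j + 1)
  have hrec := poissonMeasure_real_singleton_succ_mul r j
  have hlo := sum_range_indicator_le_poissonProb r S (j + 2)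
  have hhi := poissonProb_le_sum_range_indicator_add r S (j + 2)
  have hhead := mul_sum_range_poissonMeasure_real_le r (j + 1)
  have htail := mul_one_sub_sum_range_poissonMeasure_real_le r (j + 1)
  have haF : ∑ i ∈ range (j + 1), S.indicator (fun n => Po(r).real {n}) i
      ≤ ∑ i ∈ range (j + 1), Po(r).real {i} :=
    sum_le_sum fun i _ => Set.indicator_le_self' (fun _ _ => measureReal_nonneg) i
  have ha : 0 ≤ ∑ i ∈ range (j + 1), S.indicator (fun n => Po(r).real {n}) i :=
    sum_nonneg fun i _ => Set.indicator_nonneg (fun _ _ => measureReal_nonneg) i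
  have hεp : S.indicator (fun n => Po(r).real {n}) (j + 1) ≤ Po(r).real {j + 1} :=
    Set.indicator_le_self' (fun _ _ => measureReal_nonneg) _
  have hε : 0 ≤ S.indicator (fun n => Po(r).real {n}) (j + 1) :=
    Set.indicator_nonneg (fun _ _ => measureReal_nonneg) _
  have hp : 0 < Po(r).real {j + 1} := poissonMeasure_real_singleton_pos _ (pos_iff_ne_zero.2 hr)
  have hr' : (0 : ℝ) < r := NNReal.coe_pos.2 (pos_iff_ne_zero.2 hr)
  simp only [sum_range_succ _ (j + 1)] at hK₂ hlo hhi hhead htail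
  generalize steinSol r S (j + 2) = g₂ at *
  generalize steinSol r S (j + 1) = g₁ at *
  generalize ∑ i ∈ range (j + 1), S.indicator (fun n => Po(r).real {n}) i = a at *
  generalize ∑ i ∈ range (j + 1), Po(r).real {i} = F at *
  generalize S.indicator (fun n => Po(r).real {n}) (j + 1) = ε at *
  generalize Po(r).real {j + 1} = p at *
  generalize poissonProb r S = P at *
  push_cast at *
  have hbound := abs_steinSol_increment_numerator_le ha haF hε hεp hlo hhi hhead
    (by nlinarith) (by linarith [(j.cast_nonneg : (0 : ℝ) ≤ j)]) hp.le hr'.le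
  rw [← (by linear_combination (j + 1) * hK₂ - r * hK₁ - r * g₁ * hrec :
      (j + 1) * r * p * (g₂ - g₁) = (j + 1) * (a + ε - P * (F + p)) - r * (a - P * F)),
    abs_mul, abs_of_pos (by positivity : (0 : ℝ) < (j + 1) * r * p)] at hbound
  exact (mul_le_iff_le_one_right (by positivity)).1 hbound

theorem abs_steinSol_succ_sub_le_one (hr : r ≠ 0) (S : Set ℕ) (j : ℕ) :
    |steinSol r S (j + 1) - steinSol r S j| ≤ 1 := by
  cases j with
  | zero => simpa [steinSol] using abs_steinSol_one_le hr S
  | succ j => exact abs_steinSol_succ_succ_sub_le hr S j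

end Stein

lemma abs_sub_le_of_abs_succ_sub_le_one {g : ℕ → ℝ} (hg : ∀ j, |g (j + 1) - g j| ≤ 1) {m n : ℕ}
    (hmn : m ≤ n) : |g n - g m| ≤ n - m := by
  induction n, hmn using Nat.le_induction with
  | base => simp
  | succ n hmn ih =>
    calc |g (n + 1) - g m| ≤ |g (n + 1) - g n| + |g n - g m| := abs_sub_le _ _ _
      _ ≤ 1 + (n - m) := add_le_add (hg n) ih
      _ = (n + 1 : ℕ) - m := by push_cast; ring

section EventCount

variable {Ω ι : Type*}

def eventCount (J : Finset ι) (E : ι → Set Ω) [∀ α ω, Decidable (ω ∈ E α)] (ω : Ω) : ℕ :=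
  #{α ∈ J | ω ∈ E α}

variable {E : ι → Set Ω} [∀ α ω, Decidable (ω ∈ E α)]

lemma eventCount_le_card (J : Finset ι) (ω : Ω) : eventCount J E ω ≤ #J :=
  card_filter_le _ _

lemma natCast_eventCount (J : Finset ι) (ω : Ω) :
    (eventCount J E ω : ℝ) = ∑ α ∈ J, (E α).indicator 1 ω := by
  rw [eventCount, card_filter]
  push_cast
  simp only [Set.indicator_apply, Pi.one_apply]

lemma eventCount_filter_add_eventCount_filter_not (J : Finset ι) (p : ι → Prop) [DecidablePred p]
    (ω : Ω) : eventCount {α ∈ J | p α} E ω + eventCount {α ∈ J | ¬ p α} E ω = eventCount J E ω := by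
  rw [eventCount, eventCount, eventCount, filter_comm, filter_comm (fun α => ¬ p α),
    card_filter_add_card_filter_not]

lemma eventCount_erase_add_one [DecidableEq ι] {J : Finset ι} {α : ι} (hα : α ∈ J) {ω : Ω}
    (hω : ω ∈ E α) : eventCount (J.erase α) E ω + 1 = eventCount J E ω := by
  rw [eventCount, eventCount, filter_erase, card_erase_add_one (mem_filter.2 ⟨hα, hω⟩)]

variable [MeasurableSpace Ω] {μ : Measure Ω}

lemma measurable_eventCount (hE : ∀ α, MeasurableSet (E α)) (J : Finset ι) :
    Measurable (eventCount J E) := by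
  simp_rw [funext fun ω => eventCount.eq_1 J E ω, card_filter]
  exact Finset.measurable_sum _ fun α _ => Measurable.ite (hE α) measurable_const measurable_const

lemma integrable_comp_eventCount [IsFiniteMeasure μ] (hE : ∀ α, MeasurableSet (E α))
    (J : Finset ι) (φ : ℕ → ℝ) : Integrable (fun ω => φ (eventCount J E ω)) μ :=
  .of_bound ((measurable_of_countable φ).comp (measurable_eventCount hE J)).aestronglyMeasurable
    (∑ i ∈ range (#J + 1), |φ i|) (ae_of_all _ fun ω => single_le_sum (f := fun i => |φ i|)
      (fun _ _ => abs_nonneg _) (mem_range.2 (Nat.lt_succ_of_le (eventCount_le_card J ω))))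

lemma integral_eventCount_mul [IsFiniteMeasure μ] (hE : ∀ α, MeasurableSet (E α))
    (J : Finset ι) {h : Ω → ℝ} (hh : Integrable h μ) :
    ∫ ω, eventCount J E ω * h ω ∂μ = ∑ α ∈ J, ∫ ω in E α, h ω ∂μ := by
  simp only [natCast_eventCount, sum_mul]
  rw [integral_finsetSum _ fun α _ => ?_]
  · refine sum_congr rfl fun α _ => ?_
    rw [← integral_indicator (hE α)]
    congr 1 with ω
    by_cases hω : ω ∈ E α <;> simp [hω]
  · exact (hh.indicator (hE α)).congr (ae_of_all _ fun ω => by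
      by_cases hω : ω ∈ E α <;> simp [hω])

lemma integral_eventCount [IsFiniteMeasure μ] (hE : ∀ α, MeasurableSet (E α)) (J : Finset ι) :
    ∫ ω, (eventCount J E ω : ℝ) ∂μ = ∑ α ∈ J, μ.real (E α) := by
  simpa using integral_eventCount_mul hE J (integrable_const (1 : ℝ)) (μ := μ)

end EventCount

section ChenStein

variable {Ω ι : Type*} [MeasurableSpace Ω] {μ : Measure Ω}

lemma _root_.ProbabilityTheory.IndepFun.setIntegral_eq_measureReal_mul_integral {s : Set Ω}
    (hs : MeasurableSet s) {f : Ω → ℝ} (hf : AEStronglyMeasurable f μ)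
    (hind : IndepFun (s.indicator (1 : Ω → ℝ)) f μ) :
    ∫ ω in s, f ω ∂μ = μ.real s * ∫ ω, f ω ∂μ := by
  rw [← integral_indicator_one hs, ← hind.integral_mul_eq_mul_integral
    ((measurable_one.indicator hs).aestronglyMeasurable) hf, ← integral_indicator hs]
  congr 1 with ω
  by_cases hω : ω ∈ s <;> simp [hω]

variable {E : ι → Set Ω} [∀ α ω, Decidable (ω ∈ E α)] {I : Finset ι} {N : ι → ι → Prop}
  [DecidableRel N]

lemma abs_integral_sub_eventCount_filter_not_le [IsFiniteMeasure μ] {g : ℕ → ℝ}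
    (hg : ∀ j, |g (j + 1) - g j| ≤ 1) (hE : ∀ α, MeasurableSet (E α)) (p : ι → Prop)
    [DecidablePred p] :
    |∫ ω, g (eventCount I E ω + 1) - g (eventCount {β ∈ I | ¬ p β} E ω + 1) ∂μ|
      ≤ ∑ β ∈ I with p β, μ.real (E β) := by
  rw [← integral_eventCount hE, ← Real.norm_eq_abs]
  refine norm_integral_le_of_norm_le (integrable_comp_eventCount hE _ Nat.cast)
    (ae_of_all _ fun ω => ?_)
  rw [← eventCount_filter_add_eventCount_filter_not I p ω]
  calc _ ≤ ((eventCount {β ∈ I | p β} E ω + eventCount {β ∈ I | ¬ p β} E ω + 1 : ℕ) : ℝ)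
        - (eventCount {β ∈ I | ¬ p β} E ω + 1 : ℕ) :=
          abs_sub_le_of_abs_succ_sub_le_one hg (by omega)
    _ = _ := by push_cast; ring

lemma abs_setIntegral_sub_eventCount_filter_not_le [IsFiniteMeasure μ] [DecidableEq ι]
    {g : ℕ → ℝ} (hg : ∀ j, |g (j + 1) - g j| ≤ 1) (hE : ∀ α, MeasurableSet (E α))
    {p : ι → Prop} [DecidablePred p] {α : ι} (hα : α ∈ I) (hpα : p α) :
    |∫ ω in E α, g (eventCount I E ω) - g (eventCount {β ∈ I | ¬ p β} E ω + 1) ∂μ|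
      ≤ ∑ β ∈ I with p β ∧ β ≠ α, μ.real (E α ∩ E β) := by
  have hU : ∫ ω in E α, (eventCount {β ∈ I | p β ∧ β ≠ α} E ω : ℝ) ∂μ
      = ∑ β ∈ I with p β ∧ β ≠ α, μ.real (E α ∩ E β) := by
    rw [integral_eventCount hE]
    refine sum_congr rfl fun β _ => ?_
    rw [measureReal_restrict_apply (hE β), Set.inter_comm]
  rw [← hU, ← Real.norm_eq_abs]
  refine norm_integral_le_of_norm_le (integrable_comp_eventCount hE _ Nat.cast).integrableOn
    ((ae_restrict_iff' (hE α)).2 (ae_of_all _ fun ω hω => ?_))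
  rw [← eventCount_filter_add_eventCount_filter_not I p ω,
    ← eventCount_erase_add_one (mem_filter.2 ⟨hα, hpα⟩) hω, ← filter_ne', filter_filter]
  calc _ ≤ ((eventCount {β ∈ I | p β ∧ β ≠ α} E ω + 1 + eventCount {β ∈ I | ¬ p β} E ω : ℕ) : ℝ)
        - (eventCount {β ∈ I | ¬ p β} E ω + 1 : ℕ) :=
          abs_sub_le_of_abs_succ_sub_le_one hg (by omega)
    _ = _ := by push_cast; ring

lemma abs_chenStein_term_le [IsProbabilityMeasure μ] [DecidableEq ι] {g : ℕ → ℝ}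
    (hg : ∀ j, |g (j + 1) - g j| ≤ 1) (hE : ∀ α, MeasurableSet (E α)) {α : ι} (hα : α ∈ I)
    (hNα : N α α)
    (hindep : IndepFun ((E α).indicator (1 : Ω → ℝ)) (eventCount {β ∈ I | ¬ N α β} E) μ) :
    |μ.real (E α) * ∫ ω, g (eventCount I E ω + 1) ∂μ - ∫ ω in E α, g (eventCount I E ω) ∂μ|
      ≤ ∑ β ∈ I with N α β, μ.real (E α) * μ.real (E β)
        + ∑ β ∈ I with N α β ∧ β ≠ α, μ.real (E α ∩ E β) := by
  set W := eventCount I E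
  set V := eventCount {β ∈ I | ¬ N α β} E
  have hint := integrable_comp_eventCount (μ := μ) hE
  have hV : ∫ ω in E α, g (V ω + 1) ∂μ = μ.real (E α) * ∫ ω, g (V ω + 1) ∂μ :=
    (hindep.comp measurable_id (measurable_of_countable fun n => g (n + 1))
      ).setIntegral_eq_measureReal_mul_integral (hE α)
        (hint _ fun n => g (n + 1)).aestronglyMeasurable
  have hsplit : μ.real (E α) * ∫ ω, g (W ω + 1) ∂μ - ∫ ω in E α, g (W ω) ∂μ
      = μ.real (E α) * ∫ ω, g (W ω + 1) - g (V ω + 1) ∂μ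
        - ∫ ω in E α, g (W ω) - g (V ω + 1) ∂μ := by
    rw [integral_sub (hint I fun n => g (n + 1)) (hint _ fun n => g (n + 1)),
      integral_sub (hint I g).integrableOn (hint _ fun n => g (n + 1)).integrableOn, hV]
    ring
  rw [hsplit, ← mul_sum]
  calc _ ≤ |μ.real (E α) * ∫ ω, g (W ω + 1) - g (V ω + 1) ∂μ|
        + |∫ ω in E α, g (W ω) - g (V ω + 1) ∂μ| := abs_sub _ _
    _ ≤ _ := by
      rw [abs_mul, abs_of_nonneg measureReal_nonneg]
      gcongr
      exacts [abs_integral_sub_eventCount_filter_not_le hg hE (N α),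
        abs_setIntegral_sub_eventCount_filter_not_le hg hE hα hNα]

lemma measureReal_eventCount_mem_of_sum_eq_zero [IsProbabilityMeasure μ]
    (h0 : ∑ α ∈ I, μ.real (E α) = 0) (S : Set ℕ) :
    μ.real {ω | eventCount I E ω ∈ S} = S.indicator 1 0 := by
  have hnull : ∀ α ∈ I, ∀ᵐ ω ∂μ, ω ∉ E α := fun α hα =>
    measure_eq_zero_iff_ae_notMem.1 <| (measureReal_eq_zero_iff).1 <|
      (sum_eq_zero_iff_of_nonneg fun _ _ => measureReal_nonneg).1 h0 α hα
  have hW : {ω | eventCount I E ω ∈ S} =ᵐ[μ] {_ω | 0 ∈ S} := by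
    filter_upwards [(eventually_all_finset I).2 hnull] with ω hω
    change (eventCount I E ω ∈ S) = (0 ∈ S)
    rw [eventCount, filter_eq_empty_iff.2 hω, card_empty]
  rw [measureReal_congr hW]
  by_cases h0S : 0 ∈ S <;> simp [h0S]

theorem abs_measureReal_eventCount_mem_sub_poissonProb_le [IsProbabilityMeasure μ] [DecidableEq ι]
    (hE : ∀ α, MeasurableSet (E α)) (hN : ∀ α ∈ I, N α α)
    (hindep : ∀ α ∈ I,
      IndepFun ((E α).indicator (1 : Ω → ℝ)) (eventCount {β ∈ I | ¬ N α β} E) μ)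
    (S : Set ℕ) :
    |μ.real {ω | eventCount I E ω ∈ S} - poissonProb (∑ α ∈ I, μ.real (E α)) S|
      ≤ ∑ α ∈ I, ∑ β ∈ I with N α β, μ.real (E α) * μ.real (E β)
        + ∑ α ∈ I, ∑ β ∈ I with N α β ∧ β ≠ α, μ.real (E α ∩ E β) := by
  obtain h0 | hpos := (sum_nonneg fun α _ => measureReal_nonneg (μ := μ) (s := E α)).eq_or_lt
  · rw [← h0, measureReal_eventCount_mem_of_sum_eq_zero h0.symm, poissonProb_zero, sub_self,
      abs_zero]
    positivity
  lift ∑ α ∈ I, μ.real (E α) to ℝ≥0 using hpos.le with r hr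
  have hr0 : r ≠ 0 := (NNReal.coe_pos.1 hpos).ne'
  set W := eventCount I E
  have hW : Measurable W := measurable_eventCount hE I
  have hint := integrable_comp_eventCount (μ := μ) hE I
  have hS : ∫ ω, S.indicator 1 (W ω) ∂μ = μ.real {ω | W ω ∈ S} := by
    rw [← integral_indicator_one (s := {ω | W ω ∈ S}) (hW MeasurableSet.of_discrete)]
    congr 1 with ω
  calc |μ.real {ω | W ω ∈ S} - poissonProb r S|
      = |∫ ω, r * steinSol r S (W ω + 1) - W ω * steinSol r S (W ω) ∂μ| := by
        simp_rw [steinSol_stein_eq hr0]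
        rw [integral_sub (hint _) (integrable_const _), integral_const, hS, probReal_univ, one_smul]
    _ = |∑ α ∈ I, (μ.real (E α) * ∫ ω, steinSol r S (W ω + 1) ∂μ
          - ∫ ω in E α, steinSol r S (W ω) ∂μ)| := by
        rw [integral_sub ((hint fun n => steinSol r S (n + 1)).const_mul _)
          (hint fun n => n * steinSol r S n),
          integral_const_mul, integral_eventCount_mul hE I (hint _), hr, sum_mul, sum_sub_distrib]
    _ ≤ ∑ α ∈ I, |μ.real (E α) * ∫ ω, steinSol r S (W ω + 1) ∂μ
          - ∫ ω in E α, steinSol r S (W ω) ∂μ| := abs_sum_le_sum_abs _ _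
    _ ≤ _ := by
        rw [← sum_add_distrib]
        exact sum_le_sum fun α hα => abs_chenStein_term_le (abs_steinSol_succ_sub_le_one hr0 S) hE
          hα (hN α hα) (hindep α hα)

end ChenStein

section Factorization

variable {Ω : Type*} [MeasurableSpace Ω]

lemma _root_.Function.FactorsThrough.measurable {β γ : Type*} [MeasurableSpace β] [Countable β]
    [MeasurableSingletonClass β] [MeasurableSpace γ] {f : Ω → β} {F : Ω → γ}
    (hF : F.FactorsThrough f) (hf : Measurable f) : Measurable F := by
  rcases isEmpty_or_nonempty Ω with hΩ | ⟨⟨ω₀⟩⟩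
  · exact Subsingleton.measurable
  · rw [← hF.extend_comp fun _ => F ω₀]
    exact (measurable_of_countable _).comp hf

lemma _root_.ProbabilityTheory.iIndepFun.indepFun_of_factorsThrough {μ : Measure Ω} {ι : Type*}
    {β : ι → Type*} [∀ i, MeasurableSpace (β i)] [∀ i, Countable (β i)]
    [∀ i, MeasurableSingletonClass (β i)] {X : ∀ i, Ω → β i} (hX : iIndepFun X μ)
    (hmeas : ∀ i, Measurable (X i)) {S T : Finset ι} (hST : Disjoint S T) {γ δ : Type*}
    [MeasurableSpace γ] [MeasurableSpace δ] {F : Ω → γ} {G : Ω → δ}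
    (hF : F.FactorsThrough fun ω (i : S) => X i ω) (hG : G.FactorsThrough fun ω (i : T) => X i ω) :
    IndepFun F G μ := by
  have := hX.isProbabilityMeasure
  obtain ⟨ω₀⟩ := nonempty_of_isProbabilityMeasure μ
  rw [← hF.extend_comp fun _ => F ω₀, ← hG.extend_comp fun _ => G ω₀]
  exact (hX.indepFun_finset S T hST hmeas).comp (measurable_of_countable _)
    (measurable_of_countable _)

end Factorization

section Itemsets

variable {Ω : Type*} {n t : ℕ} (A : Fin t → Fin n → Ω → Bool)

lemma support_factorsThrough (X : Finset (Fin n)) {T : Finset (Fin t × Fin n)}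
    (hT : ∀ j, ∀ i ∈ X, (j, i) ∈ T) :
    (support A X).FactorsThrough fun ω (p : T) => A p.1.1 p.1.2 ω := by
  intro ω ω' h
  unfold support
  congr 1
  refine filter_congr fun j _ => forall₂_congr fun i hi => ?_
  rw [show A j i ω = A j i ω' from congr_fun h ⟨(j, i), hT j i hi⟩]

variable [MeasurableSpace Ω]

lemma measurableSet_le_support (hmeas : ∀ j i, Measurable (A j i)) (s : ℕ) (X : Finset (Fin n)) :
    MeasurableSet {ω | s ≤ support A X ω} :=
  (support_factorsThrough A X (T := univ) fun _ _ _ => mem_univ _).measurable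
    (measurable_pi_lambda _ fun p => hmeas p.1.1 p.1.2) measurableSet_Ici

lemma indepFun_indicator_eventCount_disjoint {μ : Measure Ω} (hmeas : ∀ j i, Measurable (A j i))
    (hindep : iIndepFun (fun p : Fin t × Fin n => A p.1 p.2) μ) (k s : ℕ) (X : Finset (Fin n)) :
    IndepFun ({ω | s ≤ support A X ω}.indicator (1 : Ω → ℝ))
      (eventCount {Y ∈ univ.powersetCard k | ¬ Y ∩ X ≠ ∅} fun Y => {ω | s ≤ support A Y ω}) μ := by
  refine hindep.indepFun_of_factorsThrough (fun p => hmeas p.1 p.2) (S := univ ×ˢ X)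
    (T := univ ×ˢ Xᶜ) (disjoint_product.2 (Or.inr disjoint_compl_right)) ?_ ?_
  · intro ω ω' h
    simp only [Set.indicator_apply, Set.mem_ofPred_eq, Pi.one_apply,
      support_factorsThrough A X (fun j i hi => mem_product.2 ⟨mem_univ j, hi⟩) h]
  · intro ω ω' h
    unfold eventCount
    congr 1
    refine filter_congr fun Y hY => ?_
    have hYX : Disjoint Y X := disjoint_iff_inter_eq_empty.2 (not_not.1 (mem_filter.1 hY).2)
    simp only [Set.mem_ofPred_eq, support_factorsThrough A Y (T := univ ×ˢ Xᶜ)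
      (fun j i hi => mem_product.2 ⟨mem_univ j, mem_compl.2 (disjoint_left.1 hYX hi)⟩) h]

end Itemsets

theorem chen_stein_bound_general
    {Ω : Type*} [MeasurableSpace Ω] (μ : Measure Ω) [IsProbabilityMeasure μ]
    {n t : ℕ}
    (A : Fin t → Fin n → Ω → Bool)
    (hmeas : ∀ j i, Measurable (A j i))
    (hindep : iIndepFun
      (fun p : Fin t × Fin n => A p.1 p.2) μ)
    (k s : ℕ) (hk : 1 ≤ k)
    (lam : ℝ) (hlam : lam = ∫ ω, (Qhat A k s ω : ℝ) ∂μ) :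
    ∀ S : Set ℕ,
      |(μ {ω | Qhat A k s ω ∈ S}).toReal - poissonProb lam S|
        ≤ b1 μ A k s + b2 μ A k s := by
  intro S
  have hE := measurableSet_le_support A hmeas s
  have hrefl : ∀ X : Finset (Fin n), X ∈ univ.powersetCard k → X ∩ X ≠ ∅ := fun X hX => by
    rw [inter_self, ← nonempty_iff_ne_empty, ← card_pos, (mem_powersetCard.1 hX).2]
    omega
  obtain rfl : lam = ∑ X ∈ univ.powersetCard k, pX μ A s X := hlam.trans (integral_eventCount hE _)
  exact abs_measureReal_eventCount_mem_sub_poissonProb_le hE (N := fun X Y => Y ∩ X ≠ ∅) hrefl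
    (fun X _ => indepFun_indicator_eventCount_disjoint A hmeas hindep k s X) S

/-- **Chen–Stein bound (Theorem 1 / Theorem `arratia`).**
In the random dataset model (items placed in transactions independently, item `i` with
probability `f i`), the variation distance between the law of `Q̂_{k,s}` and the law of a
Poisson random variable `U` with the same mean `λ = E[Q̂_{k,s}]` is at most `b₁(s) + b₂(s)`:
for every `A ⊆ ℕ`, `|Pr(Q̂_{k,s} ∈ A) − Pr(U ∈ A)| ≤ b₁(s) + b₂(s)`. -/
theorem chen_stein_bound
    {Ω : Type*} [MeasurableSpace Ω] (μ : Measure Ω) [IsProbabilityMeasure μ]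
    {n t : ℕ} (hn : 1 ≤ n) (ht : 1 ≤ t)
    (f : Fin n → ℝ) (hf : ∀ i, f i ∈ Set.Icc (0:ℝ) 1)
    (A : Fin t → Fin n → Ω → Bool)
    (hmeas : ∀ j i, Measurable (A j i))
    (hindep : iIndepFun
      (fun p : Fin t × Fin n => A p.1 p.2) μ)
    (hfreq : ∀ j i, μ {ω | A j i ω = true} = ENNReal.ofReal (f i))
    (k s : ℕ) (hk : 1 ≤ k) (hs : 1 ≤ s)
    (lam : ℝ) (hlam : lam = ∫ ω, (Qhat A k s ω : ℝ) ∂μ) :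
    ∀ S : Set ℕ,
      |(μ {ω | Qhat A k s ω ∈ S}).toReal - poissonProb lam S|
        ≤ b1 μ A k s + b2 μ A k s :=
  chen_stein_bound_general μ A hmeas hindep k s hk lam hlam

end PaperModel
end
end

section
/- Fix integers k ≥ 2 and s ≥ 2, a constant γ > 0, and a constant c with 0 < c ≤ (k−1)(1−1/s). For each n consider the random dataset model with common item probability p = γ/n and t = t(n) transactions, where t(n) = O(n^c). Let λ_n = E[Q̂_{k,s}] and let U_n be a Poisson random variable with mean λ_n. Then as n → ∞, sup_{A ⊆ ℕ} |Pr(Q̂_{k,s} ∈ A) − Pr(U_n ∈ A)| = O(1/n^{2s−2}). -/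
/-!
With `p = γ/n` and `t ≤ C n^c`, a fixed `k`-itemset has support at least `s` with probability
at most `C(t,s) p^{sk}`, so `λ_n = O(n^{1-s}) → 0`, and both `Q̂` and the Poisson variable live
essentially on `{0, 1}`. For an `ℕ`-valued `N` with mean `λ` and `D = E[N(N-1)]`, comparing the
masses of `0`, `1` and `[2, ∞)` bounds the distance to `Poisson(λ)` by `4(D + λ²)`.
For `Q̂`, `D` is the sum of `Pr(Z_X = Z_Y = 1)` over pairs `X ≠ Y`; if `|X ∩ Y| = m < k`, a union
bound over the two `s`-sets of witnessing transactions gives `C(t,s) p^{(2k-m)s} (1 + t p^m)^s`,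
and summing over pairs gives `D = O(n^{2-2s})`. The hypothesis `c ≤ (k-1)(1-1/s)` yields
`t^s = O(n^{(k-1)(s-1)})`, which is exactly the growth every power of `n` above can absorb.
-/

open MeasureTheory ProbabilityTheory Finset Filter Asymptotics

noncomputable section

namespace PaperModel

variable {Ω : Type*}

open scoped NNReal

section LawOnNat

variable (ρ π : Measure ℕ) [IsFiniteMeasure ρ] [IsFiniteMeasure π]

open Classical in
lemma measureReal_eq_sum_add_measureReal_inter_Ici (S : Set ℕ) (m : ℕ) :
    ρ.real S = ∑ j ∈ (range m).filter (· ∈ S), ρ.real {j} + ρ.real (S ∩ Set.Ici m) := by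
  have hsplit : S = ↑((range m).filter (· ∈ S)) ∪ (S ∩ Set.Ici m) := by
    ext j
    simp only [coe_filter, mem_range, Set.mem_union, Set.mem_ofPred_eq, Set.mem_inter_iff,
      Set.mem_Ici]
    grind
  have hdisj : Disjoint (↑((range m).filter (· ∈ S)) : Set ℕ) (S ∩ Set.Ici m) := by
    rw [Set.disjoint_left]
    simp only [coe_filter, mem_range, Set.mem_ofPred_eq, Set.mem_inter_iff, Set.mem_Ici]
    intro j hj hj'
    omega
  conv_lhs => rw [hsplit]
  rw [measureReal_union hdisj (.of_discrete), sum_measureReal_singleton]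

lemma measureReal_singleton_eq_sub (m : ℕ) :
    ρ.real {m} = ρ.real (Set.Ici m) - ρ.real (Set.Ici (m + 1)) := by
  have hsplit : Set.Ici m = {m} ∪ Set.Ici (m + 1) := by
    ext j; simp only [Set.mem_Ici, Set.mem_union, Set.mem_singleton_iff]; omega
  have hdisj : Disjoint {m} (Set.Ici (m + 1)) := by simp
  rw [hsplit, measureReal_union hdisj measurableSet_Ici]
  ring

open Classical in
lemma abs_measureReal_sub_le (S : Set ℕ) (m : ℕ) :
    |ρ.real S - π.real S| ≤
      ∑ j ∈ range m, |ρ.real {j} - π.real {j}| + ρ.real (Set.Ici m) + π.real (Set.Ici m) := by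
  rw [measureReal_eq_sum_add_measureReal_inter_Ici ρ S m,
    measureReal_eq_sum_add_measureReal_inter_Ici π S m]
  have hhead : |∑ j ∈ (range m).filter (· ∈ S), ρ.real {j} -
      ∑ j ∈ (range m).filter (· ∈ S), π.real {j}| ≤ ∑ j ∈ range m, |ρ.real {j} - π.real {j}| := by
    rw [← sum_sub_distrib]
    exact (abs_sum_le_sum_abs _ _).trans
      (sum_le_sum_of_subset_of_nonneg (filter_subset _ _) fun _ _ _ => abs_nonneg _)
  have hρ : ρ.real (S ∩ Set.Ici m) ≤ ρ.real (Set.Ici m) := measureReal_mono Set.inter_subset_right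
  have hπ : π.real (S ∩ Set.Ici m) ≤ π.real (Set.Ici m) := measureReal_mono Set.inter_subset_right
  have := abs_sub_le_iff.1 hhead
  rw [abs_sub_le_iff]
  constructor <;> linarith [measureReal_nonneg (μ := ρ) (s := S ∩ Set.Ici m),
    measureReal_nonneg (μ := π) (s := S ∩ Set.Ici m)]

end LawOnNat

lemma poissonProb_eq_measureReal (r : ℝ≥0) (S : Set ℕ) :
    poissonProb r S = (poissonMeasure r).real S := by
  simp_rw [poissonProb, ← poissonMeasure_real_singleton, measureReal_def]
  rw [← ENNReal.tsum_toReal_eq fun _ => measure_ne_top _ _]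
  exact congrArg ENNReal.toReal
    (tsum_measure_preimage_singleton S.to_countable (f := id) fun _ _ => .of_discrete)

lemma poissonMeasure_real_Ici_two_le (r : ℝ≥0) : (poissonMeasure r).real (Set.Ici 2) ≤ r ^ 2 := by
  have h1 := measureReal_singleton_eq_sub (poissonMeasure r) 1
  have h0 := measureReal_singleton_eq_sub (poissonMeasure r) 0
  rw [show Set.Ici (0 : ℕ) = Set.univ from Set.Ici_bot, probReal_univ] at h0
  simp only [poissonMeasure_real_singleton, pow_zero, pow_one, Nat.factorial_zero,
    Nat.factorial_one, Nat.cast_one, div_one, mul_one] at h0 h1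
  have := mul_le_mul_of_nonneg_right (Real.one_sub_le_exp_neg r) (by positivity : (0 : ℝ) ≤ 1 + r)
  nlinarith

section FactorialMoments

variable {ν : Measure ℕ} [IsProbabilityMeasure ν]

lemma measureReal_Ici_one_le_integral (h1 : Integrable (fun n : ℕ => (n : ℝ)) ν) :
    ν.real (Set.Ici 1) ≤ ∫ n, (n : ℝ) ∂ν := by
  rw [← integral_indicator_one measurableSet_Ici]
  refine integral_mono ((integrable_const 1).indicator measurableSet_Ici) h1 fun n => ?_
  rcases n with _ | n <;> simp

lemma integral_sub_measureReal_Ici_one_le (h1 : Integrable (fun n : ℕ => (n : ℝ)) ν)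
    (h2 : Integrable (fun n : ℕ => (n : ℝ) * (n - 1)) ν) :
    ∫ n, (n : ℝ) ∂ν - ν.real (Set.Ici 1) ≤ ∫ n, (n : ℝ) * (n - 1) ∂ν := by
  have hind : Integrable ((Set.Ici 1).indicator (1 : ℕ → ℝ)) ν :=
    (integrable_const 1).indicator measurableSet_Ici
  rw [← integral_indicator_one measurableSet_Ici, ← integral_sub h1 hind]
  refine integral_mono (h1.sub hind) h2 fun n => ?_
  rcases n with _ | n <;> simp
  nlinarith [n.cast_nonneg (α := ℝ)]

lemma measureReal_Ici_two_le_integral (h2 : Integrable (fun n : ℕ => (n : ℝ) * (n - 1)) ν) :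
    ν.real (Set.Ici 2) ≤ ∫ n, (n : ℝ) * (n - 1) ∂ν := by
  rw [← integral_indicator_one measurableSet_Ici]
  refine integral_mono ((integrable_const 1).indicator measurableSet_Ici) h2 fun n => ?_
  rcases n with _ | _ | n <;> simp
  nlinarith [n.cast_nonneg (α := ℝ)]

theorem abs_measureReal_sub_poissonProb_le (h1 : Integrable (fun n : ℕ => (n : ℝ)) ν)
    (h2 : Integrable (fun n : ℕ => (n : ℝ) * (n - 1)) ν) (S : Set ℕ) :
    |ν.real S - poissonProb (∫ n, (n : ℝ) ∂ν) S| ≤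
      4 * (∫ n, (n : ℝ) * (n - 1) ∂ν + (∫ n, (n : ℝ) ∂ν) ^ 2) := by
  have hm1 := measureReal_Ici_one_le_integral h1
  have hm2 := integral_sub_measureReal_Ici_one_le h1 h2
  have hm3 := measureReal_Ici_two_le_integral h2
  obtain ⟨r, hr⟩ : ∃ r : ℝ≥0, ∫ n, (n : ℝ) ∂ν = r :=
    ⟨⟨_, integral_nonneg fun n => n.cast_nonneg⟩, rfl⟩
  rw [hr] at hm1 hm2 ⊢
  rw [poissonProb_eq_measureReal]
  have hsplit := abs_measureReal_sub_le ν (poissonMeasure r) S 2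
  simp only [sum_range_succ, range_zero, sum_empty, zero_add, poissonMeasure_real_singleton,
    pow_zero, pow_one, Nat.factorial_zero, Nat.factorial_one, Nat.cast_one, div_one,
    mul_one] at hsplit
  have hν1 := measureReal_singleton_eq_sub ν 1
  have hν0 := measureReal_singleton_eq_sub ν 0
  rw [show Set.Ici (0 : ℕ) = Set.univ from Set.Ici_bot, probReal_univ] at hν0
  have hν2 : 0 ≤ ν.real (Set.Ici 2) := measureReal_nonneg
  have hπ2 := poissonMeasure_real_Ici_two_le r
  have he1 := Real.one_sub_le_exp_neg r
  have he2 : Real.exp (-r) * (1 + r) ≤ 1 := by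
    calc Real.exp (-r) * (1 + r) ≤ Real.exp (-r) * Real.exp r := by
          gcongr; linarith [Real.add_one_le_exp (r : ℝ)]
      _ = 1 := by rw [← Real.exp_add, neg_add_cancel, Real.exp_zero]
  have he3 : r * (1 - r) ≤ r * Real.exp (-r) := mul_le_mul_of_nonneg_left he1 r.2
  have hb0 : |ν.real {0} - Real.exp (-r)| ≤ ∫ n, (n : ℝ) * (n - 1) ∂ν + r ^ 2 := by
    rw [abs_le]; constructor <;> nlinarith
  have hb1 : |ν.real {1} - Real.exp (-r) * r| ≤ 2 * ∫ n, (n : ℝ) * (n - 1) ∂ν + r ^ 2 := by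
    rw [abs_le]; constructor <;> nlinarith
  linarith

end FactorialMoments

theorem abs_measureReal_mem_sub_poissonProb_le [MeasurableSpace Ω] {μ : Measure Ω}
    [IsProbabilityMeasure μ] {N : Ω → ℕ}
    (hN : Measurable N) (h1 : Integrable (fun ω => (N ω : ℝ)) μ)
    (h2 : Integrable (fun ω => (N ω : ℝ) * (N ω - 1)) μ) (S : Set ℕ) :
    |μ.real {ω | N ω ∈ S} - poissonProb (∫ ω, (N ω : ℝ) ∂μ) S| ≤
      4 * (∫ ω, (N ω : ℝ) * (N ω - 1) ∂μ + (∫ ω, (N ω : ℝ) ∂μ) ^ 2) := by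
  have := Measure.isProbabilityMeasure_map (μ := μ) hN.aemeasurable
  have hmap {g : ℕ → ℝ} : ∫ n, g n ∂μ.map N = ∫ ω, g (N ω) ∂μ :=
    integral_map hN.aemeasurable .of_discrete
  have hint {g : ℕ → ℝ} (hg : Integrable (fun ω => g (N ω)) μ) : Integrable g (μ.map N) :=
    (integrable_map_measure .of_discrete hN.aemeasurable).2 hg
  have h := abs_measureReal_sub_poissonProb_le (hint h1) (hint h2) S
  rwa [hmap, hmap, map_measureReal_apply hN .of_discrete] at h

section CountingVariable

variable {ι : Type*} (I : Finset ι) (P : ι → Ω → Prop) [∀ i ω, Decidable (P i ω)]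

lemma natCast_card_filter_eq_sum_indicator (ω : Ω) :
    (#{i ∈ I | P i ω} : ℝ) = ∑ i ∈ I, {ω | P i ω}.indicator 1 ω := by
  rw [card_filter, Nat.cast_sum]
  exact sum_congr rfl fun i _ => by by_cases h : P i ω <;> simp [h]

lemma natCast_card_filter_mul_sub_one_eq_sum_indicator [DecidableEq ι] (ω : Ω) :
    (#{i ∈ I | P i ω} : ℝ) * (#{i ∈ I | P i ω} - 1) =
      ∑ i ∈ I, ∑ j ∈ I.erase i, ({ω | P i ω} ∩ {ω | P j ω}).indicator 1 ω := by
  have hidem (i : ι) : {ω | P i ω}.indicator (1 : Ω → ℝ) ω * {ω | P i ω}.indicator 1 ω =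
      {ω | P i ω}.indicator 1 ω := by
    by_cases h : P i ω <;> simp [h]
  simp_rw [Set.inter_indicator_one, Pi.mul_apply, mul_sub, mul_one,
    natCast_card_filter_eq_sum_indicator, sum_mul_sum]
  rw [← sum_sub_distrib]
  refine sum_congr rfl fun i hi => ?_
  rw [← add_sum_erase I _ hi, hidem, add_sub_cancel_left]

variable [MeasurableSpace Ω] {μ : Measure Ω} {P} (hP : ∀ i, MeasurableSet {ω | P i ω})
include hP

lemma measurable_card_filter : Measurable fun ω => #{i ∈ I | P i ω} := by
  simp_rw [card_filter]
  exact Finset.measurable_sum _ fun i _ => Measurable.ite (hP i) measurable_const measurable_const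

lemma integrable_card_filter [IsFiniteMeasure μ] :
    Integrable (fun ω => (#{i ∈ I | P i ω} : ℝ)) μ := by
  simp_rw [natCast_card_filter_eq_sum_indicator]
  exact integrable_finsetSum _ fun i _ => (integrable_const 1).indicator (hP i)

lemma integral_card_filter [IsFiniteMeasure μ] :
    ∫ ω, (#{i ∈ I | P i ω} : ℝ) ∂μ = ∑ i ∈ I, μ.real {ω | P i ω} := by
  simp_rw [natCast_card_filter_eq_sum_indicator]
  rw [integral_finsetSum _ fun i _ => (integrable_const 1).indicator (hP i)]
  simp_rw [integral_indicator_one (hP _)]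

lemma integrable_card_filter_mul_sub_one [DecidableEq ι] [IsFiniteMeasure μ] :
    Integrable (fun ω => (#{i ∈ I | P i ω} : ℝ) * (#{i ∈ I | P i ω} - 1)) μ := by
  simp_rw [natCast_card_filter_mul_sub_one_eq_sum_indicator]
  exact integrable_finsetSum _ fun i _ => integrable_finsetSum _ fun j _ =>
    (integrable_const 1).indicator ((hP i).inter (hP j))

lemma integral_card_filter_mul_sub_one [DecidableEq ι] [IsFiniteMeasure μ] :
    ∫ ω, (#{i ∈ I | P i ω} : ℝ) * (#{i ∈ I | P i ω} - 1) ∂μ =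
      ∑ i ∈ I, ∑ j ∈ I.erase i, μ.real ({ω | P i ω} ∩ {ω | P j ω}) := by
  simp_rw [natCast_card_filter_mul_sub_one_eq_sum_indicator]
  rw [integral_finsetSum _ fun i _ => integrable_finsetSum _ fun j _ =>
    (integrable_const 1).indicator ((hP i).inter (hP j))]
  refine sum_congr rfl fun i _ => ?_
  rw [integral_finsetSum _ fun j _ => (integrable_const 1).indicator ((hP i).inter (hP j))]
  simp_rw [integral_indicator_one ((hP _).inter (hP _))]

end CountingVariable

section Combinatorics

variable {α : Type*} [Fintype α] [DecidableEq α]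

lemma card_filter_card_inter_eq_le (X : Finset α) (j i : ℕ) :
    #{Y ∈ powersetCard j univ | #(X ∩ Y) = i} ≤
      (#X).choose i * (Fintype.card α).choose (j - i) := by
  rw [← card_powersetCard, ← card_univ, ← card_powersetCard, ← card_product]
  refine card_le_card_of_injOn (fun Y => (X ∩ Y, Y \ X)) (fun Y hY => ?_) fun Y _ Y' _ hYY' => ?_
  · simp only [coe_filter, mem_powersetCard_univ, Set.mem_ofPred_eq] at hY
    have := card_sdiff_add_card_inter Y X
    rw [inter_comm] at this
    simp only [mem_coe, mem_product, mem_powersetCard, inter_subset_left, true_and,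
      subset_univ]
    omega
  · simp only [Prod.mk.injEq] at hYY'
    rw [← sdiff_union_inter Y X, ← sdiff_union_inter Y' X, inter_comm Y, inter_comm Y', hYY'.1,
      hYY'.2]

lemma sum_powersetCard_card_inter_le (X : Finset α) (j : ℕ) {f : ℕ → ℝ} (hf : ∀ i, 0 ≤ f i) :
    ∑ Y ∈ powersetCard j univ, f #(X ∩ Y) ≤
      ∑ i ∈ range (j + 1), ((#X).choose i * (Fintype.card α).choose (j - i) : ℕ) * f i := by
  have hmaps : ∀ Y ∈ powersetCard j univ, #(X ∩ Y) ∈ range (j + 1) := fun Y hY => by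
    rw [mem_range, Nat.lt_succ_iff, ← (mem_powersetCard_univ.1 hY)]
    exact card_le_card inter_subset_right
  rw [← sum_fiberwise_of_maps_to hmaps]
  refine sum_le_sum fun i _ => ?_
  rw [sum_congr rfl fun Y hY => by rw [(mem_filter.1 hY).2], sum_const, nsmul_eq_mul]
  exact mul_le_mul_of_nonneg_right (by exact_mod_cast card_filter_card_inter_eq_le X j i) (hf i)

lemma sum_pow_sub_card_inter_le (S : Finset α) {y : ℝ} (hy : 0 ≤ y) :
    ∑ S' ∈ powersetCard #S univ, y ^ (#S - #(S ∩ S')) ≤ (1 + Fintype.card α * y) ^ #S := by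
  refine (sum_powersetCard_card_inter_le S #S fun i => pow_nonneg hy (#S - i)).trans ?_
  rw [add_pow]
  refine sum_le_sum fun i _ => ?_
  have hchoose : ((Fintype.card α).choose (#S - i) : ℝ) ≤ (Fintype.card α) ^ (#S - i) := by
    exact_mod_cast Nat.choose_le_pow _ _
  rw [one_pow, one_mul, mul_pow, Nat.cast_mul]
  calc ((#S).choose i : ℝ) * (Fintype.card α).choose (#S - i) * y ^ (#S - i)
      ≤ (#S).choose i * (Fintype.card α : ℝ) ^ (#S - i) * y ^ (#S - i) := by gcongr
    _ = _ := by ring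

lemma sum_erase_powersetCard_le (X : Finset α) {f : ℕ → ℝ} (hf : ∀ i, 0 ≤ f i) :
    ∑ Y ∈ (powersetCard #X univ).erase X, f #(X ∩ Y) ≤
      ∑ i ∈ range #X, ((#X).choose i * (Fintype.card α).choose (#X - i) : ℕ) * f i := by
  have h := sum_powersetCard_card_inter_le X #X hf
  rw [← add_sum_erase _ _ (mem_powersetCard_univ.2 rfl), sum_range_succ, inter_self] at h
  simpa using h

end Combinatorics

lemma card_product_union_product_add {β γ : Type*} [DecidableEq β] [DecidableEq γ]
    (S₁ S₂ : Finset β) (X Y : Finset γ) :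
    #(S₁ ×ˢ X ∪ S₂ ×ˢ Y) + #(S₁ ∩ S₂) * #(X ∩ Y) = #S₁ * #X + #S₂ * #Y := by
  rw [← card_product, ← product_inter_product, card_union_add_card_inter, card_product,
    card_product]

section Growth

variable {x q g : ℝ}

lemma pow_mul_pow_le_pow (hx : 1 ≤ x) (hq : 0 ≤ q) (hxq : x * q ≤ g) {e j : ℕ} (hej : e ≤ j) :
    x ^ e * q ^ j ≤ g ^ j :=
  calc x ^ e * q ^ j ≤ x ^ j * q ^ j := by gcongr
    _ = (x * q) ^ j := (mul_pow x q j).symm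
    _ ≤ g ^ j := pow_le_pow_left₀ (mul_nonneg (zero_le_one.trans hx) hq) hxq j

lemma mul_pow_mul_pow_le {T C : ℝ} {a e j : ℕ} (hT : T ≤ C * x ^ a) (hC : 0 ≤ C) (hx : 1 ≤ x)
    (hq : 0 ≤ q) (hxq : x * q ≤ g) (haej : a + e ≤ j) : T * (x ^ e * q ^ j) ≤ C * g ^ j :=
  calc T * (x ^ e * q ^ j) ≤ C * x ^ a * (x ^ e * q ^ j) := by
        gcongr
    _ = C * (x ^ (a + e) * q ^ j) := by ring
    _ ≤ C * g ^ j := by gcongr; exact pow_mul_pow_le_pow hx hq hxq haej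

lemma pair_term_le {T C : ℝ} {s i a e j : ℕ} (hT0 : 0 ≤ T) (hT : T ^ s ≤ C * x ^ a) (hC : 0 ≤ C)
    (hx : 1 ≤ x) (hq : 0 ≤ q) (hxq : x * q ≤ g) (hg : 1 ≤ g) (h₁ : a + e ≤ j)
    (h₂ : 2 * a + e ≤ j + i * s) :
    x ^ e * (T ^ s * (q ^ j * (1 + T * q ^ i) ^ s)) ≤
      2 ^ (s - 1) * (C + C ^ 2) * g ^ (j + i * s) := by
  have hsplit : (1 + T * q ^ i) ^ s ≤ 2 ^ (s - 1) * (1 + (T * q ^ i) ^ s) := by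
    simpa using add_pow_le zero_le_one (by positivity : 0 ≤ T * q ^ i) s
  have hT2 : (T ^ s) ^ 2 ≤ C ^ 2 * x ^ (2 * a) := by
    rw [mul_comm 2 a, pow_mul, ← mul_pow]; gcongr
  have hgj : g ^ j ≤ g ^ (j + i * s) := pow_le_pow_right₀ hg (Nat.le_add_right j _)
  calc x ^ e * (T ^ s * (q ^ j * (1 + T * q ^ i) ^ s))
      ≤ x ^ e * (T ^ s * (q ^ j * (2 ^ (s - 1) * (1 + (T * q ^ i) ^ s)))) := by gcongr
    _ = 2 ^ (s - 1) * (T ^ s * (x ^ e * q ^ j) + (T ^ s) ^ 2 * (x ^ e * q ^ (j + i * s))) := by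
        rw [pow_add q, pow_mul q i s]; ring
    _ ≤ 2 ^ (s - 1) * (C * g ^ j + C ^ 2 * g ^ (j + i * s)) := by
        have h₁' := mul_pow_mul_pow_le hT hC hx hq hxq h₁
        have h₂' := mul_pow_mul_pow_le hT2 (sq_nonneg C) hx hq hxq h₂
        gcongr
    _ ≤ 2 ^ (s - 1) * (C * g ^ (j + i * s) + C ^ 2 * g ^ (j + i * s)) := by gcongr
    _ = 2 ^ (s - 1) * (C + C ^ 2) * g ^ (j + i * s) := by ring

end Growth

lemma isBigO_pow_of_isBigO_rpow {f : ℕ → ℝ} {c : ℝ} (h : f =O[atTop] fun n => (n : ℝ) ^ c)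
    {s a : ℕ} (hca : c * s ≤ a) : (fun n => f n ^ s) =O[atTop] fun n => (n : ℝ) ^ a := by
  refine (h.pow s).trans (IsBigO.of_bound 1 ?_)
  filter_upwards [eventually_ge_atTop 1] with n hn
  have hn' : (1 : ℝ) ≤ n := by exact_mod_cast hn
  rw [one_mul, Real.norm_of_nonneg (by positivity), Real.norm_of_nonneg (by positivity),
    ← Real.rpow_natCast, ← Real.rpow_mul (by positivity), ← Real.rpow_natCast]
  exact Real.rpow_le_rpow_of_exponent_le hn' hca

lemma measureReal_setOf_forall_eq_pow [MeasurableSpace Ω] {μ : Measure Ω} {ι : Type*}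
    {B : ι → Ω → Bool} (hB : iIndepFun B μ) {q : ℝ} (hq : ∀ i, μ.real {ω | B i ω = true} = q)
    (T : Finset ι) :
    μ.real {ω | ∀ i ∈ T, B i ω = true} = q ^ #T := by
  have h := hB.measure_inter_preimage_eq_mul T (sets := fun _ => {true})
    fun _ _ => measurableSet_singleton true
  have hset : {ω | ∀ i ∈ T, B i ω = true} = ⋂ i ∈ T, B i ⁻¹' {true} := by ext; simp
  rw [measureReal_def, hset, h, ENNReal.toReal_prod, ← prod_const]
  exact prod_congr rfl fun i _ => hq i

section Model

variable {n t : ℕ} {A : Fin t → Fin n → Ω → Bool}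

lemma setOf_le_support_eq (s : ℕ) (X : Finset (Fin n)) :
    {ω | s ≤ support A X ω} =
      ⋃ S ∈ powersetCard s univ, {ω | ∀ c ∈ S ×ˢ X, A c.1 c.2 ω = true} := by
  ext ω
  simp only [Set.mem_ofPred_eq, Set.mem_iUnion, mem_powersetCard_univ, exists_prop, mem_product,
    and_imp, Prod.forall]
  constructor
  · intro h
    obtain ⟨S, hS, hcard⟩ := exists_subset_card_eq h
    exact ⟨S, hcard, fun j i hj hi => (mem_filter.1 (hS hj)).2 i hi⟩
  · rintro ⟨S, rfl, hS⟩
    exact card_le_card fun j hj => mem_filter.2 ⟨mem_univ j, fun i hi => hS j i hj hi⟩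

variable [MeasurableSpace Ω]

lemma measurableSet_setOf_le_support (hA : ∀ j i, Measurable (A j i)) (s : ℕ)
    (X : Finset (Fin n)) : MeasurableSet {ω | s ≤ support A X ω} := by
  rw [setOf_le_support_eq]
  refine Finset.measurableSet_biUnion _ fun S _ => ?_
  simp only [Set.ofPred_forall]
  exact Finset.measurableSet_biInter _ fun c _ => hA c.1 c.2 (measurableSet_singleton true)

variable {μ : Measure Ω}

lemma iSup_abs_sub_poissonProb_le [IsProbabilityMeasure μ] (hmeas : ∀ j i, Measurable (A j i))
    (k s : ℕ) :
    ⨆ S : Set ℕ, |(μ {ω | Qhat A k s ω ∈ S}).toReal -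
        poissonProb (∫ ω, (Qhat A k s ω : ℝ) ∂μ) S| ≤
      4 * (∑ X ∈ powersetCard k univ, ∑ Y ∈ (powersetCard k univ).erase X, pXY μ A s X Y +
        (∑ X ∈ powersetCard k univ, pX μ A s X) ^ 2) := by
  have hE := measurableSet_setOf_le_support hmeas s
  refine ciSup_le fun S => ?_
  exact (abs_measureReal_mem_sub_poissonProb_le (measurable_card_filter _ hE)
    (integrable_card_filter _ hE) (integrable_card_filter_mul_sub_one _ hE) S).trans_eq
    (by rw [integral_card_filter_mul_sub_one _ hE, integral_card_filter _ hE]; rfl)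

variable {q : ℝ}
  (hA : iIndepFun (fun c : Fin t × Fin n => A c.1 c.2) μ)
  (hq : ∀ j i, μ.real {ω | A j i ω = true} = q)
include hA hq

lemma pX_le (s : ℕ) (X : Finset (Fin n)) : pX μ A s X ≤ t.choose s * q ^ (s * #X) := by
  calc pX μ A s X
      ≤ ∑ S ∈ powersetCard s univ, μ.real {ω | ∀ c ∈ S ×ˢ X, A c.1 c.2 ω = true} := by
        rw [pX, ← measureReal_def, setOf_le_support_eq]
        exact measureReal_biUnion_finset_le _ _
    _ = t.choose s * q ^ (s * #X) := by
        rw [sum_congr rfl fun S hS => by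
          rw [measureReal_setOf_forall_eq_pow hA (fun c => hq c.1 c.2), card_product,
            (mem_powersetCard_univ.1 hS)]]
        simp

lemma pXY_le [IsFiniteMeasure μ] (hq0 : 0 ≤ q) {k : ℕ} (s : ℕ) {X Y : Finset (Fin n)}
    (hX : #X = k) (hY : #Y = k) :
    pXY μ A s X Y ≤
      t.choose s * (q ^ ((2 * k - #(X ∩ Y)) * s) * (1 + t * q ^ #(X ∩ Y)) ^ s) := by
  set m := #(X ∩ Y)
  have hm : m ≤ k := hX ▸ card_le_card inter_subset_left
  have hsub : {ω | s ≤ support A X ω} ∩ {ω | s ≤ support A Y ω} ⊆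
      ⋃ S₁ ∈ powersetCard s univ, ⋃ S₂ ∈ powersetCard s univ,
        {ω | ∀ c ∈ S₁ ×ˢ X ∪ S₂ ×ˢ Y, A c.1 c.2 ω = true} := by
    rintro ω ⟨hωX, hωY⟩
    rw [setOf_le_support_eq, Set.mem_iUnion₂] at hωX hωY
    obtain ⟨S₁, hS₁, hω₁⟩ := hωX
    obtain ⟨S₂, hS₂, hω₂⟩ := hωY
    refine Set.mem_biUnion hS₁ (Set.mem_biUnion hS₂ fun c hc => ?_)
    rcases mem_union.1 hc with hc | hc
    exacts [hω₁ c hc, hω₂ c hc]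
  have hcard {S₁ S₂ : Finset (Fin t)} (hS₁ : #S₁ = s) (hS₂ : #S₂ = s) :
      #(S₁ ×ˢ X ∪ S₂ ×ˢ Y) = (2 * k - m) * s + m * (s - #(S₁ ∩ S₂)) := by
    have h := card_product_union_product_add S₁ S₂ X Y
    have hi : #(S₁ ∩ S₂) ≤ s := hS₁ ▸ card_le_card inter_subset_left
    rw [hS₁, hS₂, hX, hY] at h
    zify [hi, (by omega : m ≤ 2 * k)] at h ⊢
    linear_combination h
  calc pXY μ A s X Y
      ≤ ∑ S₁ ∈ powersetCard s univ, ∑ S₂ ∈ powersetCard s univ,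
          μ.real {ω | ∀ c ∈ S₁ ×ˢ X ∪ S₂ ×ˢ Y, A c.1 c.2 ω = true} := by
        rw [pXY, ← measureReal_def]
        refine (measureReal_mono hsub (measure_ne_top _ _)).trans
          ((measureReal_biUnion_finset_le _ _).trans ?_)
        exact sum_le_sum fun S₁ _ => measureReal_biUnion_finset_le _ _
    _ = ∑ S₁ ∈ powersetCard s univ, q ^ ((2 * k - m) * s) *
          ∑ S₂ ∈ powersetCard s univ, (q ^ m) ^ (s - #(S₁ ∩ S₂)) := by
        refine sum_congr rfl fun S₁ hS₁ => ?_
        rw [mul_sum]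
        refine sum_congr rfl fun S₂ hS₂ => ?_
        rw [measureReal_setOf_forall_eq_pow hA (fun c => hq c.1 c.2),
          hcard (mem_powersetCard_univ.1 hS₁) (mem_powersetCard_univ.1 hS₂), pow_add, pow_mul,
          pow_mul]
    _ ≤ ∑ S₁ ∈ powersetCard s univ, q ^ ((2 * k - m) * s) * (1 + t * q ^ m) ^ s := by
        refine sum_le_sum fun S₁ hS₁ => mul_le_mul_of_nonneg_left ?_ (by positivity)
        rw [← mem_powersetCard_univ.1 hS₁]
        simpa using sum_pow_sub_card_inter_le S₁ (pow_nonneg hq0 m)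
    _ = _ := by simp

lemma sum_pX_le (k s : ℕ) :
    ∑ X ∈ powersetCard k univ, pX μ A s X ≤ n.choose k * (t.choose s * q ^ (s * k)) := by
  calc ∑ X ∈ powersetCard k univ, pX μ A s X
      ≤ ∑ X ∈ powersetCard k univ, t.choose s * q ^ (s * k) :=
        sum_le_sum fun X hX => by simpa [(mem_powersetCard_univ.1 hX)] using pX_le hA hq s X
    _ = _ := by simp

lemma sum_sum_pXY_le [IsFiniteMeasure μ] (hq0 : 0 ≤ q) (k s : ℕ) :
    ∑ X ∈ powersetCard k univ, ∑ Y ∈ (powersetCard k univ).erase X, pXY μ A s X Y ≤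
      n.choose k * ∑ i ∈ range k, (k.choose i * n.choose (k - i) : ℕ) *
        (t.choose s * (q ^ ((2 * k - i) * s) * (1 + t * q ^ i) ^ s)) := by
  have hcard : (n.choose k : ℝ) = #(powersetCard k (univ : Finset (Fin n))) := by simp
  rw [hcard, ← nsmul_eq_mul, ← sum_const]
  refine sum_le_sum fun X hX => ?_
  obtain rfl := mem_powersetCard_univ.1 hX
  calc ∑ Y ∈ (powersetCard #X univ).erase X, pXY μ A s X Y
      ≤ ∑ Y ∈ (powersetCard #X univ).erase X,
          t.choose s * (q ^ ((2 * #X - #(X ∩ Y)) * s) * (1 + t * q ^ #(X ∩ Y)) ^ s) :=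
        sum_le_sum fun Y hY =>
          pXY_le hA hq hq0 s rfl (mem_powersetCard_univ.1 (mem_of_mem_erase hY))
    _ ≤ _ := by
        simpa only [Fintype.card_fin] using sum_erase_powersetCard_le X (f := fun i =>
          t.choose s * (q ^ ((2 * #X - i) * s) * (1 + t * q ^ i) ^ s)) fun i => by positivity

lemma pow_mul_sum_pX_le (hq0 : 0 ≤ q) {g C : ℝ} (hC : 0 ≤ C) (hn : 1 ≤ (n : ℝ))
    (hnq : n * q ≤ g) {k s : ℕ} (hk : 1 ≤ k) (hs : 1 ≤ s)
    (hT : (t : ℝ) ^ s ≤ C * n ^ ((k - 1) * (s - 1))) :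
    (n : ℝ) ^ (s - 1) * ∑ X ∈ powersetCard k univ, pX μ A s X ≤ C * g ^ (s * k) := by
  have hexp : (k - 1) * (s - 1) + (s - 1 + k) ≤ s * k := by
    zify [hk, hs]; nlinarith
  calc (n : ℝ) ^ (s - 1) * ∑ X ∈ powersetCard k univ, pX μ A s X
      ≤ n ^ (s - 1) * (n ^ k * (t ^ s * q ^ (s * k))) := by
        refine mul_le_mul_of_nonneg_left ((sum_pX_le hA hq k s).trans ?_) (by positivity)
        gcongr <;> exact_mod_cast Nat.choose_le_pow _ _
    _ = t ^ s * (n ^ (s - 1 + k) * q ^ (s * k)) := by ring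
    _ ≤ C * g ^ (s * k) := mul_pow_mul_pow_le hT hC hn hq0 hnq hexp

lemma pow_mul_sum_sum_pXY_le [IsFiniteMeasure μ] (hq0 : 0 ≤ q) {g C : ℝ} (hC : 0 ≤ C)
    (hn : 1 ≤ (n : ℝ)) (hnq : n * q ≤ g) (hg : 1 ≤ g) {k s : ℕ} (hk : 1 ≤ k) (hs : 1 ≤ s)
    (hT : (t : ℝ) ^ s ≤ C * n ^ ((k - 1) * (s - 1))) :
    (n : ℝ) ^ (2 * s - 2) *
        ∑ X ∈ powersetCard k univ, ∑ Y ∈ (powersetCard k univ).erase X, pXY μ A s X Y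
      ≤ 2 ^ k * (2 ^ (s - 1) * (C + C ^ 2) * g ^ (2 * k * s)) := by
  set B := 2 ^ (s - 1) * (C + C ^ 2) * g ^ (2 * k * s)
  have hpair : ∀ i ∈ range k, (n : ℝ) ^ (2 * s - 2) * (n ^ k * n ^ (k - i) *
      (t ^ s * (q ^ ((2 * k - i) * s) * (1 + t * q ^ i) ^ s))) ≤ B := fun i hi => by
    have hik := mem_range.1 hi
    have hexp : (2 * k - i) * s + i * s = 2 * k * s := by
      rw [← add_mul, Nat.sub_add_cancel (by omega)]
    -- the two exponent conditions have slack `(k - i - 1) * (s - 1)` and `i`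
    have hpair := pair_term_le (i := i) (e := 2 * s - 2 + (k + (k - i))) (j := (2 * k - i) * s)
      (Nat.cast_nonneg t) hT hC hn hq0 hnq hg ?_ ?_
    · rw [hexp] at hpair
      exact (le_of_eq (by ring)).trans hpair
    all_goals
      zify [hk, hs, hik.le, (by omega : i ≤ 2 * k), (by omega : 2 ≤ 2 * s)]
      nlinarith [mul_nonneg (by omega : (0 : ℤ) ≤ k - i - 1) (by omega : (0 : ℤ) ≤ s - 1)]
  have hchoose : ∑ i ∈ range k, (k.choose i : ℝ) ≤ 2 ^ k := by
    exact_mod_cast (sum_le_sum_of_subset (range_subset_range.2 k.le_succ)).trans_eq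
      k.sum_range_choose
  calc (n : ℝ) ^ (2 * s - 2) *
        ∑ X ∈ powersetCard k univ, ∑ Y ∈ (powersetCard k univ).erase X, pXY μ A s X Y
      ≤ n ^ (2 * s - 2) * (n ^ k * ∑ i ∈ range k, k.choose i * n ^ (k - i) *
          (t ^ s * (q ^ ((2 * k - i) * s) * (1 + t * q ^ i) ^ s))) := by
        refine mul_le_mul_of_nonneg_left ((sum_sum_pXY_le hA hq hq0 k s).trans ?_) (by positivity)
        push_cast
        gcongr <;> exact_mod_cast Nat.choose_le_pow _ _
    _ = ∑ i ∈ range k, k.choose i * (n ^ (2 * s - 2) * (n ^ k * n ^ (k - i) *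
          (t ^ s * (q ^ ((2 * k - i) * s) * (1 + t * q ^ i) ^ s)))) := by
        rw [mul_sum, mul_sum]; exact sum_congr rfl fun i _ => by ring
    _ ≤ ∑ i ∈ range k, k.choose i * B := sum_le_sum fun i hi => by gcongr; exact hpair i hi
    _ ≤ 2 ^ k * B := by
        rw [← sum_mul]; exact mul_le_mul_of_nonneg_right hchoose (by positivity)

theorem pow_mul_iSup_abs_sub_poissonProb_le [IsProbabilityMeasure μ]
    (hmeas : ∀ j i, Measurable (A j i)) (hq0 : 0 ≤ q) {g C : ℝ} (hC : 0 ≤ C)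
    (hn : 1 ≤ (n : ℝ)) (hnq : n * q ≤ g) (hg : 1 ≤ g) {k s : ℕ} (hk : 1 ≤ k) (hs : 1 ≤ s)
    (hT : (t : ℝ) ^ s ≤ C * n ^ ((k - 1) * (s - 1))) :
    (n : ℝ) ^ (2 * s - 2) * ⨆ S : Set ℕ, |(μ {ω | Qhat A k s ω ∈ S}).toReal -
        poissonProb (∫ ω, (Qhat A k s ω : ℝ) ∂μ) S| ≤
      4 * (2 ^ k * (2 ^ (s - 1) * (C + C ^ 2) * g ^ (2 * k * s)) + (C * g ^ (s * k)) ^ 2) := by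
  have hmean := pow_mul_sum_pX_le hA hq hq0 hC hn hnq hk hs hT
  have hpairs := pow_mul_sum_sum_pXY_le hA hq hq0 hC hn hnq hg hk hs hT
  have hmean0 : 0 ≤ (n : ℝ) ^ (s - 1) * ∑ X ∈ powersetCard k univ, pX μ A s X :=
    mul_nonneg (by positivity) (sum_nonneg fun _ _ => ENNReal.toReal_nonneg)
  calc (n : ℝ) ^ (2 * s - 2) * ⨆ S : Set ℕ, |(μ {ω | Qhat A k s ω ∈ S}).toReal -
        poissonProb (∫ ω, (Qhat A k s ω : ℝ) ∂μ) S|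
      ≤ n ^ (2 * s - 2) * (4 * (∑ X ∈ powersetCard k univ,
          ∑ Y ∈ (powersetCard k univ).erase X, pXY μ A s X Y +
            (∑ X ∈ powersetCard k univ, pX μ A s X) ^ 2)) := by
        gcongr; exact iSup_abs_sub_poissonProb_le hmeas k s
    _ = 4 * (n ^ (2 * s - 2) * ∑ X ∈ powersetCard k univ,
          ∑ Y ∈ (powersetCard k univ).erase X, pXY μ A s X Y +
            (n ^ (s - 1) * ∑ X ∈ powersetCard k univ, pX μ A s X) ^ 2) := by
        rw [mul_pow, ← pow_mul, show (s - 1) * 2 = 2 * s - 2 by omega]; ring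
    _ ≤ _ := by gcongr

end Model

theorem poisson_approx_fixed_p_general
    {k s : ℕ} (hk : 2 ≤ k) (hs : 2 ≤ s)
    (γ : ℝ) (hγ : 0 < γ)
    (c : ℝ) (hc : c ≤ ((k : ℝ) - 1) * (1 - 1 / (s : ℝ)))
    {Ω : ℕ → Type*} [∀ n, MeasurableSpace (Ω n)]
    (μ : ∀ n, Measure (Ω n)) [∀ n, IsProbabilityMeasure (μ n)]
    (t : ℕ → ℕ)
    (htO : (fun n => (t n : ℝ)) =O[atTop] fun n => (n : ℝ) ^ c)
    (A : ∀ n, Fin (t n) → Fin n → Ω n → Bool)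
    (hmeas : ∀ n j i, Measurable (A n j i))
    (hindep : ∀ n, iIndepFun
      (fun p : Fin (t n) × Fin n => A n p.1 p.2) (μ n))
    (hfreq : ∀ n : ℕ, γ ≤ n → ∀ j i,
      μ n {ω | A n j i ω = true} = ENNReal.ofReal (γ / n)) :
    (fun n => ⨆ S : Set ℕ,
        |(μ n {ω | Qhat (A n) k s ω ∈ S}).toReal
          - poissonProb (∫ ω, (Qhat (A n) k s ω : ℝ) ∂(μ n)) S|)
      =O[atTop] fun n => 1 / (n : ℝ) ^ (2 * s - 2) := by
  have hcs : c * s ≤ ((k - 1) * (s - 1) : ℕ) := by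
    have hs0 : (0 : ℝ) < s := by positivity
    push_cast [(by omega : 1 ≤ k), (by omega : 1 ≤ s)]
    calc c * s ≤ ((k : ℝ) - 1) * (1 - 1 / s) * s := by gcongr
      _ = ((k : ℝ) - 1) * (s - 1) := by field_simp
  obtain ⟨C, hC, hCt⟩ := (isBigO_pow_of_isBigO_rpow htO hcs).exists_pos
  refine IsBigO.of_bound (4 * (2 ^ k * (2 ^ (s - 1) * (C + C ^ 2) * max γ 1 ^ (2 * k * s)) +
    (C * max γ 1 ^ (s * k)) ^ 2)) ?_
  filter_upwards [hCt.bound, eventually_ge_atTop ⌈γ⌉₊, eventually_gt_atTop 0] with n hT hγn hn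
  have hn1 : (1 : ℝ) ≤ n := by exact_mod_cast hn
  have hq (j i) : (μ n).real {ω | A n j i ω = true} = γ / n := by
    rw [measureReal_def, hfreq n (Nat.ceil_le.1 hγn) j i, ENNReal.toReal_ofReal (by positivity)]
  have hnq : (n : ℝ) * (γ / n) ≤ max γ 1 := by
    rw [mul_div_cancel₀ _ (by positivity)]; exact le_max_left _ _
  rw [Real.norm_of_nonneg (by positivity), Real.norm_of_nonneg (by positivity)] at hT
  rw [Real.norm_of_nonneg (Real.iSup_nonneg fun S => abs_nonneg _),
    Real.norm_of_nonneg (by positivity), mul_one_div, le_div_iff₀ (by positivity), mul_comm]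
  exact pow_mul_iSup_abs_sub_poissonProb_le (hindep n) hq (hmeas n) (by positivity) hC.le hn1 hnq
    (le_max_right _ _) (by omega) (by omega) hT

/-- **Theorem `thm:poissapproxsimple`.**
Fix `k, s ≥ 2` (constants), `γ > 0` and `0 < c ≤ (k−1)(1−1/s)`. For each `n` consider the
random dataset model with common item probability `p = γ/n` and `t(n) = O(n^c)` transactions.
Let `λ_n := E[Q̂_{k,s}]` and `U_n` a Poisson random variable with mean `λ_n`. Then, as
`n → ∞`, `sup_{A ⊆ ℕ} |Pr(Q̂_{k,s} ∈ A) − Pr(U_n ∈ A)| = O(1/n^{2s−2})`. -/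
theorem poisson_approx_fixed_p
    {k s : ℕ} (hk : 2 ≤ k) (hs : 2 ≤ s)
    (γ : ℝ) (hγ : 0 < γ)
    (c : ℝ) (hc0 : 0 < c) (hc : c ≤ ((k : ℝ) - 1) * (1 - 1 / (s : ℝ)))
    {Ω : ℕ → Type*} [∀ n, MeasurableSpace (Ω n)]
    (μ : ∀ n, Measure (Ω n)) [∀ n, IsProbabilityMeasure (μ n)]
    (t : ℕ → ℕ)
    (htO : (fun n => (t n : ℝ)) =O[atTop] fun n => (n : ℝ) ^ c)
    (A : ∀ n, Fin (t n) → Fin n → Ω n → Bool)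
    (hmeas : ∀ n j i, Measurable (A n j i))
    (hindep : ∀ n, iIndepFun
      (fun p : Fin (t n) × Fin n => A n p.1 p.2) (μ n))
    (hfreq : ∀ n : ℕ, γ ≤ n → ∀ j i,
      μ n {ω | A n j i ω = true} = ENNReal.ofReal (γ / n)) :
    (fun n => ⨆ S : Set ℕ,
        |(μ n {ω | Qhat (A n) k s ω ∈ S}).toReal
          - poissonProb (∫ ω, (Qhat (A n) k s ω : ℝ) ∂(μ n)) S|)
      =O[atTop] fun n => 1 / (n : ℝ) ^ (2 * s - 2) :=
  poisson_approx_fixed_p_general hk hs γ hγ c hc μ t htO A hmeas hindep hfreq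

end PaperModel
end
end

section
/- Fix integers k ≥ 2 and s ≥ 2, constants γ > 0 and 0 < c ≤ (k−1)(1−1/s), and consider for each n the random dataset model with common item probability p = γ/n and t = t(n) transactions with t(n) = Θ(n^c). Then b_1(s) = (C(n,k)² − C(n,k)C(n−k,k)) · (Σ_{i=s}^{t} C(t,i) (γ/n)^{ki} (1−(γ/n)^k)^{t−i})², and as n → ∞, b_1(s) = Θ(n^{2cs + 2k(1−s) − 1}). -/
open MeasureTheory ProbabilityTheory Finset Filter Asymptotics

noncomputable section

namespace PaperModel

variable {Ω : Type*}

/-!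
A transaction contains a fixed `k`-itemset with probability `(γ/n)^k`, independently of the other
transactions, so the support of every `k`-itemset is binomial and `p_X` is the binomial tail
`P(Bin(t, (γ/n)^k) ≥ s)`; counting the `k`-itemsets that meet `X` then gives the exact formula.
Since `t (γ/n)^k = Θ(n^(c-k)) → 0`, the tail is within constant factors of `(t (γ/n)^k)^s`, and
`C(n,k)^2 - C(n,k) C(n-k,k) = C(n,k) (C(n,k) - C(n-k,k)) = Θ(n^k · n^(k-1))` because
`C(n-1,k-1) ≤ C(n,k) - C(n-k,k) ≤ k C(n,k-1)`.
-/

open Topology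

section Counting

variable {ι β R : Type*} [Fintype ι] [DecidableEq ι] [Fintype β] [CommSemiring R]
  (g : β → R) (P : β → Prop) [DecidablePred P]

theorem sum_prod_of_filter_eq (S : Finset ι) :
    ∑ u : ι → β with ({i | P (u i)} : Finset ι) = S, ∏ i, g (u i)
      = (∑ b with P b, g b) ^ #S * (∑ b with ¬ P b, g b) ^ (Fintype.card ι - #S) := by
  have hfiber : ({u : ι → β | ({i | P (u i)} : Finset ι) = S} : Finset (ι → β))
      = Fintype.piFinset fun i => if i ∈ S then univ.filter P else univ.filter (¬ P ·) := by
    ext u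
    simp only [Finset.ext_iff, mem_filter, mem_univ, true_and, Fintype.mem_piFinset]
    refine forall_congr' fun i => ?_
    split_ifs with hi <;> simp [hi]
  rw [hfiber, ← prod_univ_sum]
  simp only [apply_ite (fun T : Finset β => ∑ b ∈ T, g b)]
  rw [prod_ite, prod_const, prod_const, filter_univ_mem, ← sdiff_eq_filter,
    ← compl_eq_univ_sdiff, card_compl]

theorem sum_prod_of_le_card_filter (s : ℕ) :
    ∑ u : ι → β with s ≤ #({i | P (u i)} : Finset ι), ∏ i, g (u i)
      = ∑ m ∈ Icc s (Fintype.card ι), (Fintype.card ι).choose m *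
          (∑ b with P b, g b) ^ m * (∑ b with ¬ P b, g b) ^ (Fintype.card ι - m) := by
  set x := ∑ b with P b, g b
  set y := ∑ b with ¬ P b, g b
  set N := Fintype.card ι
  calc ∑ u : ι → β with s ≤ #({i | P (u i)} : Finset ι), ∏ i, g (u i)
      = ∑ S : Finset ι, ∑ u : ι → β with ({i | P (u i)} : Finset ι) = S,
          if s ≤ #S then ∏ i, g (u i) else 0 := by
        rw [sum_filter, ← sum_fiberwise univ (fun u : ι → β => ({i | P (u i)} : Finset ι))]
        refine sum_congr rfl fun S _ => sum_congr rfl fun u hu => ?_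
        rw [(mem_filter.mp hu).2]
    _ = ∑ S ∈ (univ : Finset ι).powerset, if s ≤ #S then x ^ #S * y ^ (N - #S) else 0 := by
        rw [powerset_univ]
        refine sum_congr rfl fun S _ => ?_
        rw [← sum_prod_of_filter_eq]
        split_ifs <;> simp
    _ = ∑ m ∈ range (N + 1), if s ≤ m then N.choose m * x ^ m * y ^ (N - m) else 0 := by
        rw [sum_powerset_apply_card (fun m => if s ≤ m then x ^ m * y ^ (N - m) else 0),
          card_univ]
        simp only [nsmul_eq_mul, mul_ite, mul_zero, mul_assoc, N]
    _ = _ := by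
        rw [← sum_filter]
        congr 1
        ext m
        simp only [mem_filter, mem_range, mem_Icc]
        omega

end Counting

section Rows

variable {ι R : Type*} [Fintype ι] [DecidableEq ι] [CommSemiring R] (w : Bool → R)

theorem sum_prod_filter_forall_mem_eq_true (X : Finset ι) :
    ∑ r : ι → Bool with ∀ i ∈ X, r i = true, ∏ i, w (r i)
      = w true ^ #X * (w true + w false) ^ (Fintype.card ι - #X) := by
  have hrows : ({r : ι → Bool | ∀ i ∈ X, r i = true} : Finset (ι → Bool))
      = Fintype.piFinset fun i => if i ∈ X then {true} else univ := by
    ext r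
    simp only [mem_filter, mem_univ, true_and, Fintype.mem_piFinset]
    refine forall_congr' fun i => ?_
    split_ifs with hi <;> simp [hi]
  rw [hrows, ← prod_univ_sum]
  simp only [apply_ite (fun T : Finset Bool => ∑ b ∈ T, w b), sum_singleton, Fintype.sum_bool]
  rw [prod_ite, prod_const, prod_const, filter_univ_mem, ← sdiff_eq_filter,
    ← compl_eq_univ_sdiff, card_compl]

theorem sum_prod_eq_pow_card :
    ∑ r : ι → Bool, ∏ i, w (r i) = (w true + w false) ^ Fintype.card ι := by
  rw [← Fintype.prod_sum, Fintype.sum_bool, prod_const, card_univ]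

end Rows

section Independence

variable [MeasurableSpace Ω] {μ : Measure Ω} [IsFiniteMeasure μ]

theorem measureReal_eq_sum_prod_of_iIndepFun {ι β : Type*} [Fintype ι] [DecidableEq ι]
    [Fintype β] [MeasurableSpace β] [MeasurableSingletonClass β] {f : ι → Ω → β}
    (hf : ∀ i, Measurable (f i)) (hind : iIndepFun f μ) (Q : (ι → β) → Prop)
    [DecidablePred Q] :
    μ.real {ω | Q (fun i => f i ω)} = ∑ v with Q v, ∏ i, μ.real (f i ⁻¹' {v i}) := by
  have hfiber : ∀ v : ι → β, (fun ω i => f i ω) ⁻¹' {v} = ⋂ i, f i ⁻¹' {v i} := by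
    intro v; ext ω; simp [funext_iff]
  have hset : {ω | Q (fun i => f i ω)}
      = (fun ω i => f i ω) ⁻¹' ↑({v | Q v} : Finset (ι → β)) := by
    ext; simp
  rw [hset, ← sum_measureReal_preimage_singleton]
  · refine sum_congr rfl fun v _ => ?_
    rw [hfiber, measureReal_def,
      hind.meas_iInter fun i => ⟨{v i}, measurableSet_singleton _, rfl⟩, ENNReal.toReal_prod]
    rfl
  · intro v _
    rw [hfiber]
    exact .iInter fun i => hf i (measurableSet_singleton _)

end Independence

def binomialTail (t s : ℕ) (p : ℝ) : ℝ :=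
  ∑ m ∈ Icc s t, (t.choose m : ℝ) * p ^ m * (1 - p) ^ (t - m)

section Support

variable [MeasurableSpace Ω] {μ : Measure Ω} [IsProbabilityMeasure μ]

theorem measureReal_preimage_bool {f : Ω → Bool} (hf : Measurable f) {p : ℝ} (hp : 0 ≤ p)
    (htrue : μ {ω | f ω = true} = ENNReal.ofReal p) (b : Bool) :
    μ.real (f ⁻¹' {b}) = if b then p else 1 - p := by
  have htrue' : μ.real (f ⁻¹' {true}) = p := by
    rw [measureReal_def, ← ENNReal.toReal_ofReal hp, ← htrue]; rfl
  cases b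
  · rw [← htrue', ← probReal_compl_eq_one_sub (hf (measurableSet_singleton true))]
    congr 1; ext; simp
  · exact htrue'

theorem measureReal_le_support_eq_binomialTail {n t : ℕ} {A : Fin t → Fin n → Ω → Bool}
    (hmeas : ∀ j i, Measurable (A j i))
    (hindep : iIndepFun (fun q : Fin t × Fin n => A q.1 q.2) μ) {p : ℝ} (hp : 0 ≤ p)
    (hA : ∀ j i, μ {ω | A j i ω = true} = ENNReal.ofReal p) (s : ℕ) (X : Finset (Fin n)) :
    μ.real {ω | s ≤ support A X ω} = binomialTail t s (p ^ #X) := by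
  set w : Bool → ℝ := fun b => if b then p else 1 - p
  have hw : w true + w false = 1 := by simp [w]
  refine (measureReal_eq_sum_prod_of_iIndepFun (fun q => hmeas q.1 q.2) hindep
    fun v => s ≤ #({j | ∀ i ∈ X, v (j, i) = true} : Finset (Fin t))).trans ?_
  simp_rw [measureReal_preimage_bool (hmeas _ _) hp (hA _ _)]
  -- `convert` is needed because `Fin` has its own `Decidable` instance for `∀ i, _`.
  have hgood : ∑ r : Fin n → Bool with ∀ i ∈ X, r i = true, ∏ i, w (r i) = p ^ #X := by
    rw [← mul_one (p ^ #X), ← one_pow (Fintype.card (Fin n) - #X), ← hw]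
    convert sum_prod_filter_forall_mem_eq_true w X
    rfl
  have hbad :
      ∑ r : Fin n → Bool with ¬ ∀ i ∈ X, r i = true, ∏ i, w (r i) = 1 - p ^ #X := by
    rw [← hgood, eq_sub_iff_add_eq', sum_filter_add_sum_filter_not, sum_prod_eq_pow_card, hw,
      one_pow]
  calc _ = ∑ u : Fin t → Fin n → Bool
          with s ≤ #({j | ∀ i ∈ X, u j i = true} : Finset _), ∏ j, ∏ i, w (u j i) := by
        rw [sum_filter, sum_filter]
        exact Fintype.sum_equiv (Equiv.curry _ _ _) _ _ fun v => by
          simp [Fintype.prod_prod_type, w]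
    _ = binomialTail t s (p ^ #X) := by
        convert sum_prod_of_le_card_filter (fun r : Fin n → Bool => ∏ i, w (r i))
          (fun r => ∀ i ∈ X, r i = true) s using 1
        rw [hgood, hbad, Fintype.card_fin, binomialTail]

end Support

theorem card_filter_inter_ne_empty {α : Type*} [Fintype α] [DecidableEq α] (k : ℕ)
    (X : Finset α) :
    #{Y ∈ univ.powersetCard k | Y ∩ X ≠ ∅}
      = (Fintype.card α).choose k - (Fintype.card α - #X).choose k := by
  have hdisjoint :
      {Y ∈ (univ : Finset α).powersetCard k | ¬ Y ∩ X ≠ ∅} = Xᶜ.powersetCard k := by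
    ext Y
    simp [mem_powersetCard, subset_compl_iff_disjoint_right, disjoint_iff_inter_eq_empty, and_comm]
  have hsplit :=
    card_filter_add_card_filter_not (s := univ.powersetCard k) (p := (· ∩ X ≠ ∅))
  rw [hdisjoint, card_powersetCard, card_compl, card_powersetCard, card_univ] at hsplit
  omega

theorem b1_eq_of_pX_eq [MeasurableSpace Ω] {μ : Measure Ω} {n t : ℕ}
    {A : Fin t → Fin n → Ω → Bool} {k s : ℕ} {q : ℝ}
    (hq : ∀ X : Finset (Fin n), #X = k → pX μ A s X = q) :
    b1 μ A k s = ((n.choose k : ℝ) ^ 2 - n.choose k * ((n - k).choose k : ℝ)) * q ^ 2 := by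
  have hrow : ∀ X ∈ (univ : Finset (Fin n)).powersetCard k,
      ∑ Y ∈ univ.powersetCard k with Y ∩ X ≠ ∅, pX μ A s X * pX μ A s Y
        = ((n.choose k - (n - k).choose k : ℕ) : ℝ) * q ^ 2 := by
    intro X hX
    have hXk := (mem_powersetCard.mp hX).2
    rw [sum_congr rfl fun Y hY => by
        rw [hq X hXk, hq Y (mem_powersetCard.mp (mem_filter.mp hY).1).2],
      sum_const, card_filter_inter_ne_empty, Fintype.card_fin, hXk, nsmul_eq_mul, sq]
  rw [b1, sum_congr rfl hrow, sum_const, card_powersetCard, card_univ, Fintype.card_fin,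
    nsmul_eq_mul, Nat.cast_sub (Nat.choose_le_choose k (Nat.sub_le n k))]
  ring

section BinomialTail

variable {t s : ℕ} {p : ℝ}

theorem binomialTail_le (hp0 : 0 ≤ p) (hp1 : p ≤ 1) (htp : t * p ≤ 1 / 2) :
    binomialTail t s p ≤ 2 * (t * p) ^ s := by
  have hterm : ∀ m, (t.choose m : ℝ) * p ^ m * (1 - p) ^ (t - m) ≤ (t * p) ^ m := fun m =>
    calc (t.choose m : ℝ) * p ^ m * (1 - p) ^ (t - m) ≤ (t : ℝ) ^ m * p ^ m * 1 := by
          gcongr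
          · exact_mod_cast Nat.choose_le_pow t m
          · exact pow_le_one₀ (by linarith) (by linarith)
      _ = (t * p) ^ m := by rw [mul_one, mul_pow]
  have hr0 : 0 ≤ (t : ℝ) * p := by positivity
  calc binomialTail t s p ≤ ∑ m ∈ Ico s (t + 1), ((t : ℝ) * p) ^ m := by
        rw [binomialTail, Ico_add_one_right_eq_Icc]
        exact sum_le_sum fun m _ => hterm m
    _ ≤ (t * p) ^ s / (1 - t * p) := geom_sum_Ico_le_of_lt_one hr0 (by linarith)
    _ ≤ 2 * (t * p) ^ s := by
        rw [div_le_iff₀ (by linarith)]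
        nlinarith [pow_nonneg hr0 s]

theorem le_binomialTail (hp0 : 0 ≤ p) (hp1 : p ≤ 1) (htp : t * p ≤ 1 / 2)
    (hst : 2 * s ≤ t) :
    (t * p) ^ s / (2 ^ (s + 1) * s.factorial) ≤ binomialTail t s p := by
  have hchoose : ((t : ℝ) / 2) ^ s / s.factorial ≤ t.choose s := by
    refine le_trans ?_ (Nat.pow_le_choose s t)
    gcongr
    rw [Nat.cast_sub (by omega)]
    push_cast
    have : (2 * s : ℝ) ≤ t := by exact_mod_cast hst
    linarith
  have hsurvive : (1 : ℝ) / 2 ≤ (1 - p) ^ (t - s) := by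
    have hbernoulli := one_add_mul_le_pow (a := -p) (by linarith) (t - s)
    have : ((t - s : ℕ) : ℝ) * p ≤ t * p := by gcongr; exact_mod_cast Nat.sub_le t s
    rw [← sub_eq_add_neg] at hbernoulli
    nlinarith
  calc (t * p) ^ s / (2 ^ (s + 1) * s.factorial)
      = ((t : ℝ) / 2) ^ s / s.factorial * p ^ s * (1 / 2) := by
        rw [div_pow, mul_pow, pow_succ]
        field_simp
    _ ≤ t.choose s * p ^ s * (1 - p) ^ (t - s) := by gcongr
    _ ≤ binomialTail t s p :=
        single_le_sum (f := fun m => (t.choose m : ℝ) * p ^ m * (1 - p) ^ (t - m))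
          (fun m _ => by have := sub_nonneg.mpr hp1; positivity)
          (mem_Icc.mpr ⟨le_rfl, by omega⟩)

end BinomialTail

theorem isTheta_of_le_of_le {α : Type*} {l : Filter α} {f g h u : α → ℝ} (hf : f =Θ[l] u)
    (hh : h =Θ[l] u) (hf0 : ∀ᶠ x in l, 0 ≤ f x) (hfg : ∀ᶠ x in l, f x ≤ g x)
    (hgh : ∀ᶠ x in l, g x ≤ h x) : g =Θ[l] u := by
  have hgO : g =O[l] h := IsBigO.of_bound' <| by
    filter_upwards [hf0, hfg, hgh] with x h0 h1 h2
    rw [Real.norm_of_nonneg (h0.trans h1), Real.norm_of_nonneg (h0.trans (h1.trans h2))]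
    exact h2
  have hfO : f =O[l] g := IsBigO.of_bound' <| by
    filter_upwards [hf0, hfg] with x h0 h1
    rwa [Real.norm_of_nonneg h0, Real.norm_of_nonneg (h0.trans h1)]
  exact ⟨hgO.trans hh.isBigO, hf.symm.isBigO.trans hfO⟩

theorem isTheta_binomialTail {α : Type*} {l : Filter α} {t : α → ℕ} {p : α → ℝ}
    (s : ℕ) (hp : ∀ᶠ x in l, 0 ≤ p x) (ht : Tendsto t l atTop)
    (htp : Tendsto (fun x => t x * p x) l (𝓝 0)) :
    (fun x => binomialTail (t x) s (p x)) =Θ[l] fun x => (t x * p x) ^ s := by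
  have hsmall : ∀ᶠ x in l, t x * p x ≤ 1 / 2 :=
    htp.eventually (eventually_le_nhds (by norm_num))
  have hp1 : ∀ᶠ x in l, p x ≤ 1 := by
    filter_upwards [hp, hsmall, ht.eventually_ge_atTop 1] with x h0 h1 h2
    have : (1 : ℝ) ≤ t x := by exact_mod_cast h2
    nlinarith
  refine isTheta_of_le_of_le (f := fun x => (t x * p x) ^ s / (2 ^ (s + 1) * s.factorial))
    (h := fun x => 2 * (t x * p x) ^ s) ?_ ?_ ?_ ?_ ?_
  · simp_rw [div_eq_inv_mul]
    exact isTheta_rfl.const_mul_left (by positivity)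
  · exact isTheta_rfl.const_mul_left two_ne_zero
  · filter_upwards [hp] with x h0
    positivity
  · filter_upwards [hp, hp1, hsmall, ht.eventually_ge_atTop (2 * s)] with x h0 h1 h2 h3
    exact le_binomialTail h0 h1 h2 h3
  · filter_upwards [hp, hp1, hsmall] with x h0 h1 h2
    exact binomialTail_le h0 h1 h2

section Choose

open Nat

theorem choose_add_le (m j k : ℕ) :
    (m + j).choose (k + 1) ≤ m.choose (k + 1) + j * (m + j).choose k := by
  induction j with
  | zero => simp
  | succ j ih =>
    rw [← add_assoc, choose_succ_succ', add_one_mul]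
    have hmono := choose_le_choose k (Nat.le_add_right (m + j) 1)
    have := Nat.mul_le_mul_left j hmono
    omega

theorem choose_sub_choose_sub_le (n k : ℕ) :
    n.choose k - (n - k).choose k ≤ k * n.choose (k - 1) := by
  rcases lt_or_ge n k with hnk | hkn
  · simp [choose_eq_zero_of_lt hnk]
  cases k with
  | zero => simp
  | succ k =>
    have := choose_add_le (n - (k + 1)) (k + 1) k
    rw [Nat.sub_add_cancel hkn] at this
    simp only [add_tsub_cancel_right]
    omega

theorem choose_pred_le_choose_sub_choose_sub {n k : ℕ} (hn : 0 < n) (hk : 0 < k) :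
    (n - 1).choose (k - 1) ≤ n.choose k - (n - k).choose k := by
  obtain ⟨m, rfl⟩ := Nat.exists_eq_add_one.mpr hn
  obtain ⟨j, rfl⟩ := Nat.exists_eq_add_one.mpr hk
  have := choose_le_choose (j + 1) (show m + 1 - (j + 1) ≤ m by omega)
  rw [choose_succ_succ']
  simp only [add_tsub_cancel_right]
  omega

end Choose

theorem isTheta_natCast_sub (k : ℕ) :
    (fun n : ℕ => ((n - k : ℕ) : ℝ)) =Θ[atTop] fun n => (n : ℝ) := by
  refine isTheta_of_le_of_le (f := fun n : ℕ => 2⁻¹ * (n : ℝ)) (h := fun n => (n : ℝ))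
    (isTheta_rfl.const_mul_left (by norm_num)) isTheta_rfl ?_ ?_ ?_
  · exact Eventually.of_forall fun n => by positivity
  · filter_upwards [eventually_ge_atTop (2 * k)] with n hn
    rw [Nat.cast_sub (by omega)]
    have : (2 * k : ℝ) ≤ n := by exact_mod_cast hn
    linarith
  · exact Eventually.of_forall fun n => by exact_mod_cast Nat.sub_le n k

theorem isTheta_choose_sub_choose_sub {k : ℕ} (hk : 0 < k) :
    (fun n : ℕ => ((n.choose k - (n - k).choose k : ℕ) : ℝ)) =Θ[atTop]
      fun n => (n : ℝ) ^ (k - 1) := by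
  refine isTheta_of_le_of_le (f := fun n : ℕ => ((n - 1).choose (k - 1) : ℝ))
    (h := fun n : ℕ => k * (n.choose (k - 1) : ℝ)) ?_
    ((isTheta_choose (k - 1)).const_mul_left (by positivity)) ?_ ?_ ?_
  · have hshift := tendsto_sub_atTop_nat 1
    exact IsTheta.trans ⟨(isTheta_choose (k - 1)).1.comp_tendsto hshift,
      (isTheta_choose (k - 1)).2.comp_tendsto hshift⟩ ((isTheta_natCast_sub 1).pow (k - 1))
  · exact Eventually.of_forall fun n => by positivity
  · filter_upwards [eventually_ge_atTop 1] with n hn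
    exact_mod_cast choose_pred_le_choose_sub_choose_sub hn hk
  · exact Eventually.of_forall fun n => by exact_mod_cast choose_sub_choose_sub_le n k

theorem isTheta_choose_sq_sub {k : ℕ} (hk : 0 < k) :
    (fun n : ℕ => (n.choose k : ℝ) ^ 2 - n.choose k * ((n - k).choose k : ℝ)) =Θ[atTop]
      fun n => (n : ℝ) ^ k * (n : ℝ) ^ (k - 1) := by
  have hfactor : ∀ n : ℕ, (n.choose k : ℝ) ^ 2 - n.choose k * ((n - k).choose k : ℝ)
      = n.choose k * ((n.choose k - (n - k).choose k : ℕ) : ℝ) := fun n => by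
    rw [Nat.cast_sub (Nat.choose_le_choose k (Nat.sub_le n k))]
    ring
  simp_rw [hfactor]
  exact (isTheta_choose k).mul (isTheta_choose_sub_choose_sub hk)

theorem tendsto_atTop_of_isTheta_rpow {c : ℝ} (hc : 0 < c) {t : ℕ → ℕ}
    (ht : (fun n => (t n : ℝ)) =Θ[atTop] fun n => (n : ℝ) ^ c) : Tendsto t atTop atTop := by
  have hpow := (tendsto_rpow_atTop hc).comp tendsto_natCast_atTop_atTop
  rw [← tendsto_natCast_atTop_iff (R := ℝ)]
  simpa [Function.comp_def] using ht.tendsto_norm_atTop_iff.mpr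
    (tendsto_norm_atTop_atTop.comp hpow)

theorem isTheta_mul_div_pow {f : ℕ → ℝ} {c γ : ℝ} (hγ : γ ≠ 0)
    (hf : f =Θ[atTop] fun n => (n : ℝ) ^ c) (k : ℕ) :
    (fun n : ℕ => f n * (γ / n) ^ k) =Θ[atTop] fun n => (n : ℝ) ^ (c - k) := by
  refine (hf.mul (isTheta_refl (fun n : ℕ => (γ / n) ^ k) _)).trans_eventuallyEq
    (g₂ := fun n : ℕ => γ ^ k * (n : ℝ) ^ (c - k)) ?_ |>.trans
    (isTheta_rfl.const_mul_left (pow_ne_zero k hγ))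
  filter_upwards [eventually_gt_atTop 0] with n hn
  rw [Real.rpow_sub (by positivity), Real.rpow_natCast, div_pow]
  ring

theorem pow_mul_pow_sub_one_mul_rpow_pow_sq {x : ℝ} (hx : 0 < x) {k s : ℕ} (hk : 1 ≤ k)
    (c : ℝ) :
    x ^ k * x ^ (k - 1) * ((x ^ (c - k)) ^ s) ^ 2 = x ^ (2 * c * s + 2 * k * (1 - s) - 1) := by
  simp only [← Real.rpow_natCast, ← Real.rpow_mul hx.le, ← Real.rpow_add hx]
  congr 1
  push_cast [Nat.cast_sub hk]
  ring

theorem b1_formula_and_isTheta_general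
    {k s : ℕ} (hk : 2 ≤ k)
    (γ : ℝ) (hγ : 0 < γ)
    (c : ℝ) (hc0 : 0 < c) (hc : c ≤ ((k : ℝ) - 1) * (1 - 1 / (s : ℝ)))
    {Ω : ℕ → Type*} [∀ n, MeasurableSpace (Ω n)]
    (μ : ∀ n, Measure (Ω n)) [∀ n, IsProbabilityMeasure (μ n)]
    (t : ℕ → ℕ)
    (htΘ : (fun n => (t n : ℝ)) =Θ[atTop] fun n => (n : ℝ) ^ c)
    (A : ∀ n, Fin (t n) → Fin n → Ω n → Bool)
    (hmeas : ∀ n j i, Measurable (A n j i))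
    (hindep : ∀ n, iIndepFun
      (fun p : Fin (t n) × Fin n => A n p.1 p.2) (μ n))
    (hfreq : ∀ n : ℕ, γ ≤ n → ∀ j i,
      μ n {ω | A n j i ω = true} = ENNReal.ofReal (γ / n)) :
    (∀ n : ℕ, γ ≤ n →
      b1 (μ n) (A n) k s
        = (((n.choose k : ℝ)) ^ 2 - (n.choose k : ℝ) * (((n - k).choose k : ℝ)))
          * (∑ i ∈ Finset.Icc s (t n),
              ((t n).choose i : ℝ) * (γ / n) ^ (k * i)
                * (1 - (γ / n) ^ k) ^ (t n - i)) ^ 2) ∧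
    (fun n => b1 (μ n) (A n) k s)
      =Θ[atTop] fun n =>
        (n : ℝ) ^ (2 * c * (s : ℝ) + 2 * (k : ℝ) * (1 - (s : ℝ)) - 1) := by
  have hformula (n : ℕ) (hn : γ ≤ n) : b1 (μ n) (A n) k s
      = ((n.choose k : ℝ) ^ 2 - n.choose k * ((n - k).choose k : ℝ))
        * binomialTail (t n) s ((γ / n) ^ k) ^ 2 :=
    b1_eq_of_pX_eq fun X hX => by
      rw [pX, ← measureReal_def, measureReal_le_support_eq_binomialTail (hmeas n) (hindep n)
        (div_nonneg hγ.le (hγ.le.trans hn)) (hfreq n hn), hX]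
  refine ⟨fun n hn => by simp_rw [hformula n hn, binomialTail, pow_mul], ?_⟩
  have hck : c < k := by
    have : (1 : ℝ) ≤ k := by exact_mod_cast (by omega : 1 ≤ k)
    have : 0 ≤ 1 / (s : ℝ) := by positivity
    nlinarith
  have hrate := isTheta_mul_div_pow hγ.ne' htΘ k
  have hrate0 : Tendsto (fun n : ℕ => t n * (γ / n) ^ k) atTop (𝓝 0) :=
    hrate.tendsto_zero_iff.mpr <| by simpa [Function.comp_def] using
      (tendsto_rpow_neg_atTop (sub_pos.mpr hck)).comp tendsto_natCast_atTop_atTop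
  have htail := (isTheta_binomialTail s (.of_forall fun n => by positivity)
    (tendsto_atTop_of_isTheta_rpow hc0 htΘ) hrate0).trans (hrate.pow s)
  have hb1 : (fun n => b1 (μ n) (A n) k s) =ᶠ[atTop] fun n =>
      ((n.choose k : ℝ) ^ 2 - n.choose k * ((n - k).choose k : ℝ))
        * binomialTail (t n) s ((γ / n) ^ k) ^ 2 := by
    filter_upwards [(tendsto_natCast_atTop_atTop (R := ℝ)).eventually_ge_atTop γ] with n hn
    exact hformula n hn
  refine (hb1.trans_isTheta ((isTheta_choose_sq_sub (by omega)).mul (htail.pow 2)))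
    |>.trans_eventuallyEq ?_
  filter_upwards [eventually_gt_atTop 0] with n hn
  exact pow_mul_pow_sub_one_mul_rpow_pow_sq (by positivity) (by omega) c

/-- **Exact formula and asymptotics for `b₁(s)` in the fixed-`p` model.**
Fix `k, s ≥ 2`, `γ > 0` and `0 < c ≤ (k−1)(1−1/s)`; consider for each `n` the random dataset
model with common item probability `p = γ/n` and `t(n) = Θ(n^c)` transactions. Then
`b₁(s) = (C(n,k)² − C(n,k)C(n−k,k)) · (Σ_{i=s}^{t} C(t,i) (γ/n)^{ki} (1−(γ/n)^k)^{t−i})²`,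
and as `n → ∞`, `b₁(s) = Θ(n^{2cs + 2k(1−s) − 1})`. -/
theorem b1_formula_and_isTheta
    {k s : ℕ} (hk : 2 ≤ k) (hs : 2 ≤ s)
    (γ : ℝ) (hγ : 0 < γ)
    (c : ℝ) (hc0 : 0 < c) (hc : c ≤ ((k : ℝ) - 1) * (1 - 1 / (s : ℝ)))
    {Ω : ℕ → Type*} [∀ n, MeasurableSpace (Ω n)]
    (μ : ∀ n, Measure (Ω n)) [∀ n, IsProbabilityMeasure (μ n)]
    (t : ℕ → ℕ)
    (htΘ : (fun n => (t n : ℝ)) =Θ[atTop] fun n => (n : ℝ) ^ c)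
    (A : ∀ n, Fin (t n) → Fin n → Ω n → Bool)
    (hmeas : ∀ n j i, Measurable (A n j i))
    (hindep : ∀ n, iIndepFun
      (fun p : Fin (t n) × Fin n => A n p.1 p.2) (μ n))
    (hfreq : ∀ n : ℕ, γ ≤ n → ∀ j i,
      μ n {ω | A n j i ω = true} = ENNReal.ofReal (γ / n)) :
    (∀ n : ℕ, γ ≤ n →
      b1 (μ n) (A n) k s
        = (((n.choose k : ℝ)) ^ 2 - (n.choose k : ℝ) * (((n - k).choose k : ℝ)))
          * (∑ i ∈ Finset.Icc s (t n),
              ((t n).choose i : ℝ) * (γ / n) ^ (k * i)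
                * (1 - (γ / n) ^ k) ^ (t n - i)) ^ 2) ∧
    (fun n => b1 (μ n) (A n) k s)
      =Θ[atTop] fun n =>
        (n : ℝ) ^ (2 * c * (s : ℝ) + 2 * (k : ℝ) * (1 - (s : ℝ)) - 1) :=
  b1_formula_and_isTheta_general hk γ hγ c hc0 hc μ t htΘ A hmeas hindep hfreq

end PaperModel
end
end

section
/- In the random dataset model with common item probability p, let X ≠ Y be k-element itemsets with g = |X ∩ Y| ≥ 1. Then E[Z_X Z_Y] = Pr(support of X ≥ s and support of Y ≥ s) ≤ Σ_{i=0}^{s} C(t,i)·C(t−i,s−i)·C(t−s,s−i) · p^{(2k−g)i + 2k(s−i)}. -/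
/-!
On the event, choose `s` transactions `S` supporting `X` and `s` transactions `T` supporting `Y`:
then every entry of `S × X ∪ T × Y` is `1`, which by independence has probability
`p ^ |S × X ∪ T × Y| = p ^ (2ks - g|S ∩ T|)`. A union bound over the pairs `(S, T)`, grouped by
`i = |S ∩ T|`, gives the sum, because such a pair is determined by `S ∩ T`, `S \ T ⊆ (S ∩ T)ᶜ`
and `T \ S ⊆ Sᶜ`, which leaves at most `C(t,i) C(t-i,s-i) C(t-s,s-i)` pairs.
-/

open MeasureTheory ProbabilityTheory Finset Filter Asymptotics

noncomputable section

namespace PaperModel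

variable {Ω : Type*}

section Independence

variable {ι : Type*} [MeasurableSpace Ω] {μ : Measure Ω} {B : ι → Ω → Bool} {p : ℝ}

lemma measureReal_forall_mem_eq_true (hindep : iIndepFun B μ) (hp : 0 ≤ p)
    (hfreq : ∀ q, μ {ω | B q ω = true} = ENNReal.ofReal p) (Q : Finset ι) :
    μ.real {ω | ∀ q ∈ Q, B q ω = true} = p ^ #Q := by
  have hinter : {ω | ∀ q ∈ Q, B q ω = true} = ⋂ q ∈ Q, B q ⁻¹' {true} := by
    ext ω; simp
  rw [measureReal_def, hinter, hindep.meas_biInter fun q _ => ⟨{true}, trivial, rfl⟩]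
  simp [Set.preimage, hfreq, hp]

end Independence

section OverlapPairs

variable {α : Type*} [Fintype α] [DecidableEq α]

def overlapPairs (s i : ℕ) : Finset (Finset α × Finset α) :=
  {ST ∈ powersetCard s univ ×ˢ powersetCard s univ | #(ST.1 ∩ ST.2) = i}

lemma overlapPairs_subset (s i : ℕ) :
    overlapPairs (α := α) s i ⊆
      (powersetCard i univ).biUnion fun I => (powersetCard (s - i) Iᶜ).biUnion fun S' =>
        (powersetCard (s - i) (I ∪ S')ᶜ).image fun T' => (I ∪ S', I ∪ T') := by
  rintro ⟨S, T⟩ hST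
  simp only [overlapPairs, mem_filter, mem_product, mem_powersetCard_univ] at hST
  obtain ⟨⟨hS, hT⟩, hi⟩ := hST
  have hSdiff : #(S \ T) = s - i := by rw [← hS, ← hi, ← card_sdiff_add_card_inter S T]; omega
  have hTdiff : #(T \ S) = s - i := by
    rw [← hT, ← hi, inter_comm, ← card_sdiff_add_card_inter T S]; omega
  simp only [mem_biUnion, mem_image, mem_powersetCard]
  refine ⟨S ∩ T, ⟨subset_univ _, hi⟩, S \ T, ⟨?_, hSdiff⟩, T \ S, ⟨?_, hTdiff⟩, ?_⟩
  · intro j; simp +contextual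
  · intro j; simp +contextual
  · rw [union_comm, sdiff_union_inter, inter_comm, union_comm, sdiff_union_inter]

lemma card_overlapPairs_le {s i : ℕ} (his : i ≤ s) :
    #(overlapPairs (α := α) s i) ≤
      (Fintype.card α).choose i * (Fintype.card α - i).choose (s - i)
        * (Fintype.card α - s).choose (s - i) := by
  refine (card_le_card (overlapPairs_subset s i)).trans ?_
  refine (card_biUnion_le_card_mul _ _ _ fun I hI => ?_).trans_eq
    (by rw [card_powersetCard, card_univ, mul_assoc])
  rw [mem_powersetCard_univ] at hI
  refine (card_biUnion_le_card_mul _ _ _ fun S' hS' => ?_).trans_eq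
    (by rw [card_powersetCard, card_compl, hI])
  obtain ⟨hS'I, hS'⟩ := mem_powersetCard.mp hS'
  have hIS' : #(I ∪ S') = s := by
    rw [card_union_of_disjoint (subset_compl_iff_disjoint_left.mp hS'I)]
    omega
  refine card_image_le.trans_eq ?_
  rw [card_powersetCard, card_compl, hIS']

end OverlapPairs

lemma card_product_union_product {α β : Type*} [DecidableEq α] [DecidableEq β]
    {S T : Finset α} {X Y : Finset β} {s k : ℕ} (hS : #S = s) (hT : #T = s) (hX : #X = k)
    (hY : #Y = k) :
    #(S ×ˢ X ∪ T ×ˢ Y) = (2 * k - #(X ∩ Y)) * #(S ∩ T) + 2 * k * (s - #(S ∩ T)) := by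
  have hunion := card_union_add_card_inter (S ×ˢ X) (T ×ˢ Y)
  rw [product_inter_product, card_product, card_product, card_product, hS, hT, hX, hY] at hunion
  have hg : #(X ∩ Y) ≤ k := hX ▸ card_le_card inter_subset_left
  have hi : #(S ∩ T) ≤ s := hS ▸ card_le_card inter_subset_left
  have h1 : (2 * k - #(X ∩ Y)) * #(S ∩ T) + #(X ∩ Y) * #(S ∩ T) = 2 * k * #(S ∩ T) := by
    rw [← add_mul, Nat.sub_add_cancel (by omega)]
  have h2 : 2 * k * (s - #(S ∩ T)) + 2 * k * #(S ∩ T) = 2 * k * s := by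
    rw [← mul_add, Nat.sub_add_cancel hi]
  nlinarith

lemma exists_card_eq_of_le_support {n t : ℕ} {A : Fin t → Fin n → Ω → Bool} {s : ℕ}
    {X : Finset (Fin n)} {ω : Ω} (h : s ≤ support A X ω) :
    ∃ S : Finset (Fin t), #S = s ∧ ∀ j ∈ S, ∀ i ∈ X, A j i ω = true := by
  obtain ⟨S, hS, hcard⟩ := exists_subset_card_eq h
  exact ⟨S, hcard, fun j hj => (mem_filter.mp (hS hj)).2⟩

lemma pXY_le_sum_powersetCard [MeasurableSpace Ω] {μ : Measure Ω} [IsFiniteMeasure μ]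
    {n t : ℕ} {A : Fin t → Fin n → Ω → Bool} {p : ℝ} (hp : 0 ≤ p)
    (hindep : iIndepFun (fun q : Fin t × Fin n => A q.1 q.2) μ)
    (hfreq : ∀ j i, μ {ω | A j i ω = true} = ENNReal.ofReal p) (s : ℕ) (X Y : Finset (Fin n)) :
    pXY μ A s X Y ≤
      ∑ ST ∈ powersetCard s (univ : Finset (Fin t)) ×ˢ powersetCard s univ,
        p ^ #(ST.1 ×ˢ X ∪ ST.2 ×ˢ Y) := by
  have hcover : {ω | s ≤ support A X ω} ∩ {ω | s ≤ support A Y ω} ⊆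
      ⋃ ST ∈ powersetCard s (univ : Finset (Fin t)) ×ˢ powersetCard s univ,
        {ω | ∀ q ∈ ST.1 ×ˢ X ∪ ST.2 ×ˢ Y, A q.1 q.2 ω = true} := by
    rintro ω ⟨hX, hY⟩
    obtain ⟨S, hS, hSX⟩ := exists_card_eq_of_le_support hX
    obtain ⟨T, hT, hTY⟩ := exists_card_eq_of_le_support hY
    simp only [Set.mem_iUnion]
    refine ⟨(S, T), by simp [hS, hT], ?_⟩
    simp only [Set.mem_ofPred_eq, mem_union, mem_product]
    rintro ⟨j, i⟩ (⟨hj, hi⟩ | ⟨hj, hi⟩)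
    exacts [hSX j hj i hi, hTY j hj i hi]
  calc pXY μ A s X Y ≤ _ := measureReal_mono hcover (measure_ne_top _ _)
    _ ≤ _ := measureReal_biUnion_finset_le _ _
    _ = _ := sum_congr rfl fun ST _ =>
      measureReal_forall_mem_eq_true (B := fun q : Fin t × Fin n => A q.1 q.2) hindep hp
        (fun q => hfreq q.1 q.2) _

theorem EZXZY_le_fixed_p_general
    {Ω : Type*} [MeasurableSpace Ω] (μ : Measure Ω) [IsProbabilityMeasure μ]
    {n t : ℕ}
    (p : ℝ) (hp : p ∈ Set.Icc (0:ℝ) 1)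
    (A : Fin t → Fin n → Ω → Bool)
    (hindep : iIndepFun
      (fun q : Fin t × Fin n => A q.1 q.2) μ)
    (hfreq : ∀ j i, μ {ω | A j i ω = true} = ENNReal.ofReal p)
    (k s g : ℕ)
    (X Y : Finset (Fin n)) (hX : X.card = k) (hY : Y.card = k)
    (hg : (X ∩ Y).card = g) :
    pXY μ A s X Y
      ≤ ∑ i ∈ Finset.range (s + 1),
          (t.choose i : ℝ) * ((t - i).choose (s - i) : ℝ) * ((t - s).choose (s - i) : ℝ)
            * p ^ ((2 * k - g) * i + 2 * k * (s - i)) := by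
  set e : ℕ → ℕ := fun i => (2 * k - g) * i + 2 * k * (s - i)
  have hmaps : ∀ ST ∈ powersetCard s (univ : Finset (Fin t)) ×ˢ powersetCard s univ,
      #(ST.1 ∩ ST.2) ∈ range (s + 1) := fun ST hST => by
    rw [mem_product, mem_powersetCard_univ] at hST
    exact mem_range_succ_iff.mpr (hST.1 ▸ card_le_card inter_subset_left)
  calc pXY μ A s X Y
      ≤ ∑ ST ∈ powersetCard s (univ : Finset (Fin t)) ×ˢ powersetCard s univ,
          p ^ #(ST.1 ×ˢ X ∪ ST.2 ×ˢ Y) :=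
        pXY_le_sum_powersetCard hp.1 hindep hfreq s X Y
    _ = ∑ ST ∈ powersetCard s (univ : Finset (Fin t)) ×ˢ powersetCard s univ,
          p ^ e #(ST.1 ∩ ST.2) := by
        refine sum_congr rfl fun ST hST => ?_
        rw [mem_product, mem_powersetCard_univ, mem_powersetCard_univ] at hST
        rw [card_product_union_product hST.1 hST.2 hX hY, hg]
    _ = ∑ i ∈ range (s + 1), ∑ _ST ∈ overlapPairs (α := Fin t) s i, p ^ e i :=
        (sum_fiberwise_of_maps_to' hmaps fun i => p ^ e i).symm
    _ = ∑ i ∈ range (s + 1), #(overlapPairs (α := Fin t) s i) * p ^ e i := by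
        simp only [sum_const, nsmul_eq_mul]
    _ ≤ _ := sum_le_sum fun i hi => by
        gcongr
        · exact pow_nonneg hp.1 _
        · exact_mod_cast Fintype.card_fin t ▸
            card_overlapPairs_le (α := Fin t) (mem_range_succ_iff.mp hi)

/-- **Bound on `E[Z_X Z_Y]` for overlapping itemsets (fixed-`p` model).**
If `X ≠ Y` are `k`-itemsets with `g = |X ∩ Y| ≥ 1`, then
`E[Z_X Z_Y] = Pr(support of X ≥ s ∧ support of Y ≥ s)
  ≤ Σ_{i=0}^{s} C(t,i)·C(t−i,s−i)·C(t−s,s−i) · p^{(2k−g)i + 2k(s−i)}`. -/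
theorem EZXZY_le_fixed_p
    {Ω : Type*} [MeasurableSpace Ω] (μ : Measure Ω) [IsProbabilityMeasure μ]
    {n t : ℕ} (hn : 1 ≤ n)
    (p : ℝ) (hp : p ∈ Set.Icc (0:ℝ) 1)
    (A : Fin t → Fin n → Ω → Bool)
    (hmeas : ∀ j i, Measurable (A j i))
    (hindep : iIndepFun
      (fun q : Fin t × Fin n => A q.1 q.2) μ)
    (hfreq : ∀ j i, μ {ω | A j i ω = true} = ENNReal.ofReal p)
    (k s g : ℕ) (hk : 1 ≤ k) (hs : 1 ≤ s) (hst : s ≤ t)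
    (X Y : Finset (Fin n)) (hX : X.card = k) (hY : Y.card = k) (hne : X ≠ Y)
    (hg : (X ∩ Y).card = g) (hg1 : 1 ≤ g) :
    pXY μ A s X Y
      ≤ ∑ i ∈ Finset.range (s + 1),
          (t.choose i : ℝ) * ((t - i).choose (s - i) : ℝ) * ((t - s).choose (s - i) : ℝ)
            * p ^ ((2 * k - g) * i + 2 * k * (s - i)) :=
  EZXZY_le_fixed_p_general μ p hp A hindep hfreq k s g X Y hX hY hg

end PaperModel
end
end

section
/- In the mixed random dataset model, let X ≠ Y be k-element itemsets with g = |X ∩ Y| ≥ 1 and let 1 ≤ s ≤ t. Then E[Z_X Z_Y] ≤ Σ_{i=0}^{s} t^{2s−i} · (E[R^{2s}])^{k − ig/(2s)}. -/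
open MeasureTheory ProbabilityTheory Finset Filter Asymptotics

noncomputable section

namespace PaperModel

variable {Ω : Type*}

/-- `m`-th moment `E[R^m]` of a distribution `ρ` on `ℝ`. -/
def moment (ρ : Measure ℝ) (m : ℕ) : ℝ := ∫ x, x ^ m ∂ρ

/-- The σ-algebra generated by the random frequencies `R_1, …, R_n`. -/
def sigmaR [MeasurableSpace Ω] {n : ℕ} (R : Fin n → Ω → ℝ) : MeasurableSpace Ω :=
  MeasurableSpace.comap (fun ω (i : Fin n) => R i ω) inferInstance

/-- **The mixed random dataset model**: `R_1, …, R_n` are i.i.d. with distribution `ρ`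
(taking values in `[0,1]`), and, conditioned on `(R_1, …, R_n)`, the entries `A j i` are
conditionally independent Bernoulli random variables with `Pr(A j i = 1 | R) = R i`.
The last clause expresses this conditional structure by giving the joint law of
`(R_1, …, R_n)` and any outcome pattern `b` of the table `A`. -/
def MixedModel [MeasurableSpace Ω] (μ : Measure Ω) {n t : ℕ}
    (R : Fin n → Ω → ℝ) (A : Fin t → Fin n → Ω → Bool) (ρ : Measure ℝ) : Prop :=
  (∀ i, Measurable (R i)) ∧
  (∀ j i, Measurable (A j i)) ∧
  (∀ i ω, R i ω ∈ Set.Icc (0 : ℝ) 1) ∧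
  iIndepFun R μ ∧
  (∀ i, μ.map (R i) = ρ) ∧
  (∀ b : Fin t → Fin n → Bool, ∀ B : Set (Fin n → ℝ), MeasurableSet B →
    μ ({ω | (fun i => R i ω) ∈ B} ∩ {ω | ∀ j i, A j i ω = b j i})
      = ∫⁻ ω in {ω | (fun i => R i ω) ∈ B},
          ∏ j, ∏ i, ENNReal.ofReal (if b j i then R i ω else 1 - R i ω) ∂μ)

/-!
If both `X` and `Y` have support at least `s`, there are `s`-sets of rows `S` and `T` such that
the table is `1` on every cell of `C = S ×ˢ X ∪ T ×ˢ Y`; a union bound over `(S, T)` remains.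
Given `R`, this event has probability `∏ i, R_i ^ e_i` with `e_i ≤ 2 s` cells of `C` in column
`i`, so by independence and Lyapunov's inequality `E[R^e] ≤ E[R^(2s)]^(e/(2s))` its probability
is at most `E[R^(2s)]^(#C/(2s))`, and `#C = 2 s k - #(S ∩ T) g`. Finally, at most `t^(2s-m)`
pairs `(S, T)` satisfy `#(S ∩ T) = m`.
-/

open scoped ENNReal

theorem sum_prod_filter_forall_eq_true {ι α : Type*} [Fintype ι] [DecidableEq ι]
    [CommSemiring α] (f : ι → Bool → α) (hf : ∀ p, f p true + f p false = 1) (C : Finset ι) :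
    ∑ b ∈ univ.filter (fun b : ι → Bool => ∀ p ∈ C, b p = true), ∏ p, f p (b p)
      = ∏ p ∈ C, f p true := by
  have hpi : univ.filter (fun b : ι → Bool => ∀ p ∈ C, b p = true)
      = Fintype.piFinset fun p => if p ∈ C then {true} else univ := by
    ext b
    simp only [mem_filter, mem_univ, true_and, Fintype.mem_piFinset]
    refine forall_congr' fun p => ?_
    split_ifs with hp <;> simp [hp]
  have hfiber : ∀ p, ∑ v ∈ (if p ∈ C then {true} else univ), f p v
      = if p ∈ C then f p true else 1 := by
    intro p
    split_ifs
    · exact sum_singleton _ _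
    · rw [Fintype.sum_bool, hf]
  rw [hpi, ← prod_univ_sum, Fintype.prod_congr _ _ hfiber, prod_ite_mem, univ_inter]

theorem lintegral_pow_le_rpow_lintegral_pow {α : Type*} [MeasurableSpace α] {μ : Measure α}
    [IsProbabilityMeasure μ] {f : α → ℝ≥0∞} (hf : AEMeasurable f μ) {a b : ℕ} (hab : a ≤ b) :
    ∫⁻ x, f x ^ a ∂μ ≤ ((∫⁻ x, f x ^ b ∂μ) ^ (1 / b : ℝ)) ^ a := by
  rcases Nat.eq_zero_or_pos b with rfl | hb
  · obtain rfl : a = 0 := Nat.le_zero.mp hab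
    simp
  set p : ℝ := a / b
  have hbp : (b : ℝ) * p = a := mul_div_cancel₀ _ (by positivity)
  have hp1 : p ≤ 1 := div_le_one_of_le₀ (by exact_mod_cast hab) (by positivity)
  -- Hölder with exponents `b / a` and its conjugate, the second factor being `1`
  have holder := ENNReal.lintegral_mul_norm_pow_le (hf.pow_const b) aemeasurable_const
    (g := fun _ => (1 : ℝ≥0∞)) (by positivity : 0 ≤ p) (sub_nonneg.mpr hp1) (add_sub_cancel p 1)
  calc ∫⁻ x, f x ^ a ∂μ = ∫⁻ x, (f x ^ b) ^ p * 1 ^ (1 - p) ∂μ := by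
        refine lintegral_congr fun x => ?_
        rw [ENNReal.one_rpow, mul_one, ← ENNReal.rpow_natCast (f x) b, ← ENNReal.rpow_mul, hbp,
          ENNReal.rpow_natCast]
    _ ≤ (∫⁻ x, f x ^ b ∂μ) ^ p * (∫⁻ _, 1 ∂μ) ^ (1 - p) := holder
    _ = ((∫⁻ x, f x ^ b ∂μ) ^ (1 / b : ℝ)) ^ a := by
        rw [lintegral_one, measure_univ, ENNReal.one_rpow, mul_one, ← ENNReal.rpow_natCast,
          ← ENNReal.rpow_mul, one_div_mul_eq_div]

section Combinatorics

variable {α β : Type*} [DecidableEq α] [DecidableEq β]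

theorem card_product_union_product_add_card_mul (S T : Finset α) (X Y : Finset β) :
    #(S ×ˢ X ∪ T ×ˢ Y) + #(S ∩ T) * #(X ∩ Y) = #S * #X + #T * #Y := by
  rw [← card_product, ← product_inter_product, card_union_add_card_inter, card_product,
    card_product]

theorem card_filter_snd_product_union_product_le (S T : Finset α) (X Y : Finset β) (i : β) :
    #{p ∈ S ×ˢ X ∪ T ×ˢ Y | p.2 = i} ≤ #S + #T := by
  have hsub : {p ∈ S ×ˢ X ∪ T ×ˢ Y | p.2 = i} ⊆ (S ∪ T) ×ˢ {i} := by
    intro p hp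
    simp only [mem_filter, mem_union, mem_product, mem_singleton] at hp ⊢
    tauto
  calc #{p ∈ S ×ˢ X ∪ T ×ˢ Y | p.2 = i} ≤ #((S ∪ T) ×ˢ {i}) := card_le_card hsub
    _ = #(S ∪ T) := by rw [card_product, card_singleton, mul_one]
    _ ≤ #S + #T := card_union_le S T

/-- A pair of `s`-sets meeting in `m` points is determined by its intersection and the two
differences, which are an `m`-set and two `(s - m)`-sets. -/
theorem card_pairs_powersetCard_inter_eq_le [Fintype α] {s m : ℕ} (hm : m ≤ s) :
    #{p ∈ powersetCard s (univ : Finset α) ×ˢ powersetCard s univ | #(p.1 ∩ p.2) = m}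
      ≤ Fintype.card α ^ (2 * s - m) := by
  set Q : Finset (Finset α × Finset α × Finset α) := powersetCard m univ ×ˢ
    (powersetCard (s - m) univ ×ˢ powersetCard (s - m) univ)
  set P : Finset (Finset α) := powersetCard s univ
  let split : Finset α × Finset α → Finset α × Finset α × Finset α := fun p =>
    (p.1 ∩ p.2, p.1 \ p.2, p.2 \ p.1)
  have hmaps : Set.MapsTo split ↑{p ∈ P ×ˢ P | #(p.1 ∩ p.2) = m} ↑Q := by
    rintro ⟨S, T⟩ hp
    simp only [P, coe_filter, mem_product, mem_powersetCard_univ, Set.mem_ofPred_eq] at hp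
    have hS := card_inter_add_card_sdiff S T
    have hT := card_inter_add_card_sdiff T S
    rw [inter_comm T S] at hT
    simp only [Q, split, coe_product, Set.mem_prod, mem_coe, mem_powersetCard_univ]
    omega
  have hinj : Set.InjOn split ↑{p ∈ P ×ˢ P | #(p.1 ∩ p.2) = m} := by
    rintro ⟨S, T⟩ - ⟨S', T'⟩ - h
    simp only [split, Prod.mk.injEq] at h
    obtain ⟨hI, hS, hT⟩ := h
    refine Prod.ext ?_ ?_
    · rw [← sdiff_union_inter S T, ← sdiff_union_inter S' T', hS, hI]
    · rw [← sdiff_union_inter T S, ← sdiff_union_inter T' S', hT, inter_comm T, inter_comm T',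
        hI]
  calc _ ≤ #Q := card_le_card_of_injOn split hmaps hinj
    _ = (Fintype.card α).choose m * ((Fintype.card α).choose (s - m))^2 := by
        simp [Q, card_product, card_powersetCard, sq]
    _ ≤ Fintype.card α ^ m * (Fintype.card α ^ (s - m)) ^ 2 := by
        gcongr <;> exact Nat.choose_le_pow _ _
    _ = Fintype.card α ^ (2 * s - m) := by
        rw [← pow_mul, ← pow_add]
        congr 1
        omega

end Combinatorics

def allOnes {n t : ℕ} (A : Fin t → Fin n → Ω → Bool) (C : Finset (Fin t × Fin n)) : Set Ω :=
  {ω | ∀ p ∈ C, A p.1 p.2 ω = true}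

theorem exists_rows_of_le_support {n t s : ℕ} {A : Fin t → Fin n → Ω → Bool}
    {X : Finset (Fin n)} {ω : Ω} (h : s ≤ support A X ω) :
    ∃ S ∈ powersetCard s univ, ∀ j ∈ S, ∀ i ∈ X, A j i ω = true := by
  obtain ⟨S, hS, hcard⟩ := le_card_iff_exists_subset_card.mp h
  exact ⟨S, mem_powersetCard_univ.mpr hcard, fun j hj => (mem_filter.mp (hS hj)).2⟩

theorem inter_setOf_le_support_subset {n t : ℕ} (A : Fin t → Fin n → Ω → Bool) (s : ℕ)
    (X Y : Finset (Fin n)) :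
    {ω | s ≤ support A X ω} ∩ {ω | s ≤ support A Y ω}
      ⊆ ⋃ p ∈ powersetCard s univ ×ˢ powersetCard s univ, allOnes A (p.1 ×ˢ X ∪ p.2 ×ˢ Y) := by
  rintro ω ⟨hX, hY⟩
  obtain ⟨S, hS, hSX⟩ := exists_rows_of_le_support hX
  obtain ⟨T, hT, hTY⟩ := exists_rows_of_le_support hY
  refine Set.mem_biUnion (x := (S, T)) (mem_product.mpr ⟨hS, hT⟩) fun p hp => ?_
  rcases mem_union.mp hp with hp | hp
  · exact hSX p.1 (mem_product.mp hp).1 p.2 (mem_product.mp hp).2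
  · exact hTY p.1 (mem_product.mp hp).1 p.2 (mem_product.mp hp).2

section MixedModel

variable [MeasurableSpace Ω] {μ : Measure Ω} {n t : ℕ} {R : Fin n → Ω → ℝ}
  {A : Fin t → Fin n → Ω → Bool} {ρ : Measure ℝ}

theorem measure_allOnes (hM : MixedModel μ R A ρ) (C : Finset (Fin t × Fin n)) :
    μ (allOnes A C) = ∫⁻ ω, ∏ p ∈ C, ENNReal.ofReal (R p.2 ω) ∂μ := by
  obtain ⟨hR, hA, hI, -, -, hlaw⟩ := hM
  -- Sum the law of the full table over its patterns that are `1` on `C`: each cell outside `C`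
  -- contributes a factor `R_i + (1 - R_i) = 1`.
  let pattern : (Fin t × Fin n → Bool) → Set Ω := fun b => {ω | ∀ j i, A j i ω = b (j, i)}
  let weight : (Fin t × Fin n → Bool) → Ω → ℝ≥0∞ := fun b ω =>
    ∏ p, ENNReal.ofReal (if b p then R p.2 ω else 1 - R p.2 ω)
  have hunion : allOnes A C
      = ⋃ b ∈ univ.filter (fun b : Fin t × Fin n → Bool => ∀ p ∈ C, b p = true), pattern b := by
    ext ω
    simp only [allOnes, pattern, Set.mem_ofPred_eq, Set.mem_iUnion, mem_filter, mem_univ,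
      true_and, exists_prop]
    exact ⟨fun h => ⟨fun p => A p.1 p.2 ω, h, fun _ _ => rfl⟩,
      fun ⟨b, hb, hAb⟩ p hp => (hAb p.1 p.2).trans (hb p hp)⟩
  have hdisj : Set.PairwiseDisjoint ↑(univ.filter fun b : Fin t × Fin n → Bool =>
      ∀ p ∈ C, b p = true) pattern := by
    intro b _ b' _ hbb'
    refine Set.disjoint_left.mpr fun ω hω hω' => hbb' (funext fun p => ?_)
    rw [← hω p.1 p.2, ← hω' p.1 p.2]
  have hpattern_meas : ∀ b, MeasurableSet (pattern b) := fun b => by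
    simp only [pattern, Set.ofPred_forall]
    exact .iInter fun j => .iInter fun i => hA j i (measurableSet_singleton _)
  have hweight_meas : ∀ b, Measurable (weight b) := fun b =>
    Finset.measurable_prod _ fun p _ => by
      cases b p
      · exact (measurable_const.sub (hR p.2)).ennreal_ofReal
      · exact (hR p.2).ennreal_ofReal
  have hpattern : ∀ b, μ (pattern b) = ∫⁻ ω, weight b ω ∂μ := fun b => by
    have h := hlaw (fun j i => b (j, i)) Set.univ MeasurableSet.univ
    simp only [Set.mem_univ, Set.ofPred_true, Set.univ_inter, Measure.restrict_univ] at h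
    exact h.trans (lintegral_congr fun ω => (Fintype.prod_prod_type fun p =>
      ENNReal.ofReal (if b p then R p.2 ω else 1 - R p.2 ω)).symm)
  rw [hunion, measure_biUnion_finset hdisj fun b _ => hpattern_meas b,
    sum_congr rfl fun b _ => hpattern b, ← lintegral_finsetSum _ fun b _ => hweight_meas b]
  refine lintegral_congr fun ω => ?_
  have hcomplement : ∀ i, ENNReal.ofReal (R i ω) + ENNReal.ofReal (1 - R i ω) = 1 := fun i => by
    rw [← ENNReal.ofReal_add (hI i ω).1 (sub_nonneg.mpr (hI i ω).2), add_sub_cancel,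
      ENNReal.ofReal_one]
  exact sum_prod_filter_forall_eq_true
    (fun (p : Fin t × Fin n) v => ENNReal.ofReal (if v then R p.2 ω else 1 - R p.2 ω))
    (fun p => hcomplement p.2) C

theorem lintegral_ofReal_pow_eq_moment [IsFiniteMeasure μ] (hM : MixedModel μ R A ρ)
    (i : Fin n) (e : ℕ) :
    ∫⁻ ω, ENNReal.ofReal (R i ω) ^ e ∂μ = ENNReal.ofReal (moment ρ e) := by
  obtain ⟨hR, -, hI, -, hmap, -⟩ := hM
  have hint : Integrable (fun ω => R i ω ^ e) μ := by
    refine .of_bound ((hR i).pow_const e).aestronglyMeasurable 1 (.of_forall fun ω => ?_)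
    rw [Real.norm_eq_abs, abs_of_nonneg (pow_nonneg (hI i ω).1 e)]
    exact pow_le_one₀ (hI i ω).1 (hI i ω).2
  simp_rw [← ENNReal.ofReal_pow (hI i _).1]
  rw [← ofReal_integral_eq_lintegral_ofReal hint (.of_forall fun ω => pow_nonneg (hI i ω).1 e),
    moment, ← hmap i, integral_map (hR i).aemeasurable (by fun_prop)]

/-- By independence `μ (allOnes A C)` is a product of moments of order at most `b`, each of
which Lyapunov's inequality bounds by a power of the `b`-th moment. -/
theorem measure_allOnes_le [IsProbabilityMeasure μ] (hM : MixedModel μ R A ρ)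
    (C : Finset (Fin t × Fin n)) (b : ℕ) (hC : ∀ i, #{p ∈ C | p.2 = i} ≤ b) :
    μ (allOnes A C) ≤ (ENNReal.ofReal (moment ρ b) ^ (1 / b : ℝ)) ^ #C := by
  have hR := hM.1
  have hind := hM.2.2.2.1
  let e : Fin n → ℕ := fun i => #{p ∈ C | p.2 = i}
  let f : Fin n → Ω → ℝ≥0∞ := fun i ω => ENNReal.ofReal (R i ω) ^ e i
  calc μ (allOnes A C) = ∫⁻ ω, ∏ i, f i ω ∂μ := by
        rw [measure_allOnes hM]
        refine lintegral_congr fun ω => ?_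
        rw [← prod_fiberwise_of_maps_to' (g := Prod.snd) (fun p _ => mem_univ p.2)
          fun i => ENNReal.ofReal (R i ω)]
        exact prod_congr rfl fun i _ => prod_const _
    _ = ∏ i, ∫⁻ ω, f i ω ∂μ :=
        lintegral_prod_eq_prod_lintegral_of_indepFun _ _
          (hind.comp (fun i x => ENNReal.ofReal x ^ e i) fun i => by fun_prop)
          fun i => by fun_prop
    _ ≤ ∏ i, ((∫⁻ ω, ENNReal.ofReal (R i ω) ^ b ∂μ) ^ (1 / b : ℝ)) ^ e i :=
        prod_le_prod' fun i _ =>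
          lintegral_pow_le_rpow_lintegral_pow (by fun_prop) (hC i)
    _ = (ENNReal.ofReal (moment ρ b) ^ (1 / b : ℝ)) ^ #C := by
        simp only [lintegral_ofReal_pow_eq_moment hM, prod_pow_eq_pow_sum]
        rw [← card_eq_sum_card_fiberwise fun p _ => mem_coe.mpr (mem_univ p.2)]

theorem moment_two_mul_nonneg (ρ : Measure ℝ) (s : ℕ) : 0 ≤ moment ρ (2 * s) :=
  integral_nonneg fun x => (even_two_mul s).pow_nonneg x

theorem measureReal_allOnes_product_union_product_le [IsProbabilityMeasure μ]
    (hM : MixedModel μ R A ρ) {k s : ℕ} (hs : 1 ≤ s) {S T : Finset (Fin t)} (hS : #S = s)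
    (hT : #T = s) {X Y : Finset (Fin n)} (hX : #X = k) (hY : #Y = k) :
    μ.real (allOnes A (S ×ˢ X ∪ T ×ˢ Y))
      ≤ moment ρ (2 * s) ^ ((k : ℝ) - #(S ∩ T) * #(X ∩ Y) / (2 * s)) := by
  have hM0 := moment_two_mul_nonneg ρ s
  have hcard := card_product_union_product_add_card_mul S T X Y
  have hbound := measure_allOnes_le hM (S ×ˢ X ∪ T ×ˢ Y) (2 * s) fun i =>
    (card_filter_snd_product_union_product_le S T X Y i).trans (by omega)
  calc μ.real (allOnes A (S ×ˢ X ∪ T ×ˢ Y))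
      ≤ ((ENNReal.ofReal (moment ρ (2 * s)) ^ (1 / (2 * s : ℕ) : ℝ)) ^ #(S ×ˢ X ∪ T ×ˢ Y)).toReal :=
        ENNReal.toReal_mono (by simp) hbound
    _ = moment ρ (2 * s) ^ ((#(S ×ˢ X ∪ T ×ˢ Y) : ℝ) / (2 * s)) := by
        rw [ENNReal.toReal_pow, ← ENNReal.toReal_rpow, ENNReal.toReal_ofReal hM0,
          ← Real.rpow_natCast, ← Real.rpow_mul hM0]
        push_cast
        ring_nf
    _ = moment ρ (2 * s) ^ ((k : ℝ) - #(S ∩ T) * #(X ∩ Y) / (2 * s)) := by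
        congr 1
        rw [hS, hT, hX, hY] at hcard
        field_simp
        linarith [(by exact_mod_cast hcard : (#(S ×ˢ X ∪ T ×ˢ Y) : ℝ) + #(S ∩ T) * #(X ∩ Y)
          = s * k + s * k)]

end MixedModel

theorem EZXZY_bound_mixed_general
    {Ω : Type*} [MeasurableSpace Ω] (μ : Measure Ω) [IsProbabilityMeasure μ]
    {n t : ℕ} (R : Fin n → Ω → ℝ) (A : Fin t → Fin n → Ω → Bool)
    (ρ : Measure ℝ)
    (hM : MixedModel μ R A ρ)
    (k s g : ℕ) (hs : 1 ≤ s)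
    (X Y : Finset (Fin n)) (hX : X.card = k) (hY : Y.card = k)
    (hg : (X ∩ Y).card = g) :
    pXY μ A s X Y
      ≤ ∑ i ∈ Finset.range (s + 1),
          (t : ℝ) ^ (2 * s - i)
            * moment ρ (2 * s) ^ ((k : ℝ) - (i : ℝ) * (g : ℝ) / (2 * (s : ℝ))) := by
  set P : Finset (Finset (Fin t)) := powersetCard s univ
  set bound : ℕ → ℝ := fun m => moment ρ (2 * s) ^ ((k : ℝ) - m * g / (2 * s))
  set G : Finset (Fin t) × Finset (Fin t) → Set Ω := fun p => allOnes A (p.1 ×ˢ X ∪ p.2 ×ˢ Y)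
  have hterm : ∀ p ∈ P ×ˢ P, μ.real (G p) ≤ bound #(p.1 ∩ p.2) := fun p hp => by
    obtain ⟨hS, hT⟩ := mem_product.mp hp
    simpa only [hg] using measureReal_allOnes_product_union_product_le hM hs
      (mem_powersetCard_univ.mp hS) (mem_powersetCard_univ.mp hT) hX hY
  have hinter : ∀ p ∈ P ×ˢ P, #(p.1 ∩ p.2) ∈ range (s + 1) := fun p hp =>
    mem_range_succ_iff.mpr <| (card_le_card inter_subset_left).trans
      (mem_powersetCard_univ.mp (mem_product.mp hp).1).le
  calc pXY μ A s X Y ≤ ∑ p ∈ P ×ˢ P, μ.real (G p) :=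
        (measureReal_mono (inter_setOf_le_support_subset A s X Y) (measure_ne_top μ _)).trans
          (measureReal_biUnion_finset_le _ _)
    _ = ∑ m ∈ range (s + 1), ∑ p ∈ P ×ˢ P with #(p.1 ∩ p.2) = m, μ.real (G p) :=
        (sum_fiberwise_of_maps_to hinter _).symm
    _ ≤ ∑ m ∈ range (s + 1), #{p ∈ P ×ˢ P | #(p.1 ∩ p.2) = m} • bound m :=
        sum_le_sum fun m _ => sum_le_card_nsmul _ _ _ fun p hp =>
          (mem_filter.mp hp).2 ▸ hterm p (mem_filter.mp hp).1
    _ ≤ ∑ m ∈ range (s + 1), (t : ℝ) ^ (2 * s - m) * bound m := by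
        refine sum_le_sum fun m hm => ?_
        rw [nsmul_eq_mul]
        gcongr
        · exact Real.rpow_nonneg (moment_two_mul_nonneg ρ s) _
        · exact_mod_cast (card_pairs_powersetCard_inter_eq_le (mem_range_succ_iff.mp hm)).trans_eq
            (by rw [Fintype.card_fin])

/-- **Unconditional bound on `E[Z_X Z_Y]` in the mixed model.**
Let `X ≠ Y` be `k`-element itemsets with `g = |X ∩ Y| ≥ 1` and `1 ≤ s ≤ t`. Then
`E[Z_X Z_Y] ≤ Σ_{i=0}^{s} t^{2s−i} · (E[R^{2s}])^{k − ig/(2s)}`. -/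
theorem EZXZY_bound_mixed
    {Ω : Type*} [MeasurableSpace Ω] (μ : Measure Ω) [IsProbabilityMeasure μ]
    {n t : ℕ} (R : Fin n → Ω → ℝ) (A : Fin t → Fin n → Ω → Bool)
    (ρ : Measure ℝ) [IsProbabilityMeasure ρ]
    (hM : MixedModel μ R A ρ)
    (k s g : ℕ) (hk : 1 ≤ k) (hs : 1 ≤ s) (hst : s ≤ t)
    (X Y : Finset (Fin n)) (hX : X.card = k) (hY : Y.card = k) (hne : X ≠ Y)
    (hg : (X ∩ Y).card = g) (hg1 : 1 ≤ g) :
    pXY μ A s X Y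
      ≤ ∑ i ∈ Finset.range (s + 1),
          (t : ℝ) ^ (2 * s - i)
            * moment ρ (2 * s) ^ ((k : ℝ) - (i : ℝ) * (g : ℝ) / (2 * (s : ℝ))) :=
  EZXZY_bound_mixed_general μ R A ρ hM k s g hs X Y hX hY hg

end PaperModel
end
end
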